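/- arXiv:1501.00147 — 8 statements merged into one kernel-verified Lean document; each statement's English description precedes it below -/
import Mathlib

section
/- Suppose $z_{n+1} = A_n z_n$ has a generalized exponential dichotomy with data $(P, K, (a_j))$ and $(q_n)$ is a sequence in $\mathbb{R}^d$ such that $\sup_{n} N(n,|q|) < \infty$, where $N(n,g) = \sum_{m=-\infty}^{n-1} K \exp(-\sum_{j=m+1}^{n} a_j) g_m + \sum_{m=n}^{\infty} K \exp(-\sum_{j=n}^{m+1} a_j) g_m$. Then $\hat\phi_n = \sum_{m=-\infty}^{\infty} G(n, m+1) q_m$ is a well-defined bounded solution of $z_{n+1} = A_n z_n + q_n$, and it satisfies $|\hat\phi_n| \leq N(n,|q|)$ for all $n$. -/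
open Finset Filter ContinuousLinearMap

abbrev Euc (d : ℕ) := EuclideanSpace ℝ (Fin d)

/-- Partial sums `∑_{j=p}^{q} a_j`. -/
noncomputable def S (a : ℤ → ℝ) (p q : ℤ) : ℝ := ∑ j ∈ Finset.Icc p q, a j

/-- The general term of the dichotomy-weighted sum `N(n,g)`. -/
noncomputable def Nterm (K : ℝ) (a : ℤ → ℝ) (n : ℤ) (g : ℤ → ℝ) (m : ℤ) : ℝ :=
  if m < n then K * Real.exp (-(S a (m + 1) n)) * g m
  else K * Real.exp (-(S a n (m + 1))) * g m

/-- The map `N(n,g)` associated to a generalized exponential dichotomy. -/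
noncomputable def Nmap (K : ℝ) (a : ℤ → ℝ) (n : ℤ) (g : ℤ → ℝ) : ℝ :=
  ∑' m : ℤ, Nterm K a n g m

/-- The Green function of a generalized exponential dichotomy. -/
noncomputable def Green {d : ℕ} (W : ℤ → Euc d ≃L[ℝ] Euc d) (P : Euc d →L[ℝ] Euc d)
    (n m : ℤ) : Euc d →L[ℝ] Euc d :=
  if m ≤ n then (W n : Euc d →L[ℝ] Euc d) ∘L P ∘L ((W m).symm : Euc d →L[ℝ] Euc d)
  else -((W n : Euc d →L[ℝ] Euc d) ∘L (1 - P) ∘L ((W m).symm : Euc d →L[ℝ] Euc d))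

/-!
The dichotomy estimates bound `‖G(n, m + 1) q_m‖` by the `m`-th term of `N(n, |q|)`, so the
series defining `φ̂_n` converges absolutely and `‖φ̂_n‖ ≤ N(n, |q|)`. It solves the inhomogeneous
equation because `G(n + 1, m) = A_n G(n, m)` for `m ≠ n + 1`, while at `m = n + 1` the two
branches of the Green function differ by the identity, which contributes `q_n`.
-/

namespace Green

variable {d : ℕ} (W : ℤ → Euc d ≃L[ℝ] Euc d) (P : Euc d →L[ℝ] Euc d)

theorem norm_apply_le_Nterm {K : ℝ} {a : ℤ → ℝ}
    (hged1 : ∀ m n : ℤ, m ≤ n →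
      ‖(W n : Euc d →L[ℝ] Euc d) ∘L P ∘L ((W m).symm : Euc d →L[ℝ] Euc d)‖
        ≤ K * Real.exp (-(S a m n)))
    (hged2 : ∀ m n : ℤ, n < m →
      ‖(W n : Euc d →L[ℝ] Euc d) ∘L (1 - P) ∘L ((W m).symm : Euc d →L[ℝ] Euc d)‖
        ≤ K * Real.exp (-(S a n m)))
    (q : ℤ → Euc d) (n m : ℤ) :
    ‖Green W P n (m + 1) (q m)‖ ≤ Nterm K a n (fun m => ‖q m‖) m := by
  unfold Green Nterm
  by_cases h : m < n
  · rw [if_pos (by omega), if_pos h]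
    exact le_of_opNorm_le _ (hged1 (m + 1) n (by omega)) _
  · rw [if_neg (by omega), if_neg h, neg_apply, norm_neg]
    exact le_of_opNorm_le _ (hged2 (m + 1) n (by omega)) _

variable {W} {A : ℤ → Euc d ≃L[ℝ] Euc d} (hW : ∀ n : ℤ, W (n + 1) = (W n).trans (A n))
include hW

theorem succ_left_apply (n m : ℤ) (x : Euc d) :
    Green W P (n + 1) (m + 1) x = A n (Green W P n (m + 1) x) + if m = n then x else 0 := by
  have hWsucc : ∀ y, W (n + 1) y = A n (W n y) := fun y => by rw [hW n]; rfl
  unfold Green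
  rcases lt_trichotomy m n with h | rfl | h
  · rw [if_pos (by omega), if_pos (by omega), if_neg h.ne]
    simp [hWsucc]
  · rw [if_pos le_rfl, if_neg (by omega), if_pos rfl]
    simp only [comp_apply, neg_apply, sub_apply, one_apply_eq_self,
      ContinuousLinearEquiv.coe_coe, map_neg, map_sub, ← hWsucc,
      ContinuousLinearEquiv.apply_symm_apply]
    abel
  · rw [if_neg (by omega), if_neg (by omega), if_neg h.ne']
    simp [hWsucc]

theorem tsum_succ_left {q : ℤ → Euc d} (n : ℤ)
    (hq : Summable fun m : ℤ => Green W P n (m + 1) (q m)) :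
    ∑' m : ℤ, Green W P (n + 1) (m + 1) (q m)
      = A n (∑' m : ℤ, Green W P n (m + 1) (q m)) + q n := by
  have hsingle : Summable fun m : ℤ => if m = n then q n else 0 :=
    summable_of_ne_finset_zero (s := {n}) fun m hm => if_neg (by simpa using hm)
  calc ∑' m : ℤ, Green W P (n + 1) (m + 1) (q m)
      = ∑' m : ℤ, ((A n : Euc d →L[ℝ] Euc d) (Green W P n (m + 1) (q m))
          + if m = n then q n else 0) :=
        tsum_congr fun m => by rw [succ_left_apply P hW]; split_ifs with h <;> simp [h]
    _ = A n (∑' m : ℤ, Green W P n (m + 1) (q m)) + q n := by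
        rw [(hq.mapL _).tsum_add hsingle, tsum_ite_eq, ← (A n : Euc d →L[ℝ] Euc d).map_tsum hq]
        rfl

end Green

theorem ged_green_bounded_solution_general {d : ℕ}
    (A W : ℤ → Euc d ≃L[ℝ] Euc d)
    (hW : ∀ n : ℤ, W (n + 1) = (W n).trans (A n))
    (P : Euc d →L[ℝ] Euc d)
    (K : ℝ)
    (a : ℤ → ℝ)
    (hged1 : ∀ m n : ℤ, m ≤ n →
      ‖(W n : Euc d →L[ℝ] Euc d) ∘L P ∘L ((W m).symm : Euc d →L[ℝ] Euc d)‖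
        ≤ K * Real.exp (-(S a m n)))
    (hged2 : ∀ m n : ℤ, n < m →
      ‖(W n : Euc d →L[ℝ] Euc d) ∘L (1 - P) ∘L ((W m).symm : Euc d →L[ℝ] Euc d)‖
        ≤ K * Real.exp (-(S a n m)))
    (q : ℤ → Euc d)
    (hqsum : ∀ n : ℤ, Summable (Nterm K a n (fun m => ‖q m‖))) :
    (∀ n : ℤ, Summable (fun m : ℤ => Green W P n (m + 1) (q m))) ∧
    (∀ n : ℤ, (∑' m : ℤ, Green W P (n + 1) (m + 1) (q m))
        = A n (∑' m : ℤ, Green W P n (m + 1) (q m)) + q n) ∧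
    (∀ n : ℤ, ‖∑' m : ℤ, Green W P n (m + 1) (q m)‖ ≤ Nmap K a n (fun m => ‖q m‖)) := by
  have hbound := Green.norm_apply_le_Nterm W P hged1 hged2 q
  have hsummable n : Summable fun m : ℤ => Green W P n (m + 1) (q m) :=
    (hqsum n).of_norm_bounded (hbound n)
  exact ⟨hsummable, fun n => Green.tsum_succ_left P hW n (hsummable n),
    fun n => tsum_of_norm_bounded (hqsum n).hasSum (hbound n)⟩

theorem ged_green_bounded_solution {d : ℕ}
    (A W : ℤ → Euc d ≃L[ℝ] Euc d)
    (hW : ∀ n : ℤ, W (n + 1) = (W n).trans (A n))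
    (P : Euc d →L[ℝ] Euc d) (hP : P ∘L P = P)
    (K : ℝ) (hK : 1 ≤ K)
    (a : ℤ → ℝ) (ha : ∀ j : ℤ, 0 ≤ a j)
    (hdiv1 : ∀ p : ℤ, Tendsto (fun q : ℤ => ∑ j ∈ Finset.Icc p q, a j) atTop atTop)
    (hdiv2 : ∀ q : ℤ, Tendsto (fun p : ℤ => ∑ j ∈ Finset.Icc p q, a j) atBot atTop)
    (hged1 : ∀ m n : ℤ, m ≤ n →
      ‖(W n : Euc d →L[ℝ] Euc d) ∘L P ∘L ((W m).symm : Euc d →L[ℝ] Euc d)‖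
        ≤ K * Real.exp (-(S a m n)))
    (hged2 : ∀ m n : ℤ, n < m →
      ‖(W n : Euc d →L[ℝ] Euc d) ∘L (1 - P) ∘L ((W m).symm : Euc d →L[ℝ] Euc d)‖
        ≤ K * Real.exp (-(S a n m)))
    (q : ℤ → Euc d)
    (hqsum : ∀ n : ℤ, Summable (Nterm K a n (fun m => ‖q m‖)))
    (hqbdd : ∃ C : ℝ, ∀ n : ℤ, Nmap K a n (fun m => ‖q m‖) ≤ C) :
    (∀ n : ℤ, Summable (fun m : ℤ => Green W P n (m + 1) (q m))) ∧
    (∀ n : ℤ, (∑' m : ℤ, Green W P (n + 1) (m + 1) (q m))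
        = A n (∑' m : ℤ, Green W P n (m + 1) (q m)) + q n) ∧
    (∀ n : ℤ, ‖∑' m : ℤ, Green W P n (m + 1) (q m)‖ ≤ Nmap K a n (fun m => ‖q m‖)) :=
  ged_green_bounded_solution_general A W hW P K a hged1 hged2 q hqsum
end

section
/- Suppose $z_{n+1} = A_n z_n$ has a generalized exponential dichotomy and $(q_n)$ satisfies $\sup_n N(n,|q|) < \infty$. Then the inhomogeneous system $z_{n+1} = A_n z_n + q_n$ has a unique solution bounded on $\mathbb{Z}$, namely $\hat\phi_n = \sum_{m=-\infty}^{\infty} G(n,m+1) q_m$. -/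
open Finset Filter ContinuousLinearMap

/-!
The Green function is dominated termwise by the summand of `N(n, |q|)`, so the series
`φ̂ n = ∑ₘ G(n, m+1) q m` converges absolutely with `‖φ̂ n‖ ≤ N(n, |q|)`; and since `G(n+1, m+1)`
equals `A n ∘ G(n, m+1)` except for the jump `I` on the diagonal `m = n`, `φ̂` solves the
inhomogeneous equation. The difference of two bounded solutions has the form `W n c`. Writing
`W 0 (P c) = W 0 P (W m)⁻¹ (W m c)` for `m → -∞`, and likewise `W 0 ((1 - P) c)` for
`m → +∞`, the dichotomy estimates and the divergence of `∑ a_j` force both parts of `c` to vanish.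
-/

section Homogeneous

variable {E : Type*} [NormedAddCommGroup E] [NormedSpace ℝ E]

theorem eq_apply_symm_of_forall_succ (A W : ℤ → E ≃L[ℝ] E)
    (hW : ∀ n : ℤ, W (n + 1) = (W n).trans (A n)) {u : ℤ → E}
    (hu : ∀ n : ℤ, u (n + 1) = A n (u n)) (n : ℤ) :
    u n = W n ((W 0).symm (u 0)) := by
  induction n using Int.induction_on with
  | zero => simp
  | succ i ih => rw [hu i, ih, hW i, ContinuousLinearEquiv.trans_apply]
  | pred i ih =>
    apply (A (-i - 1)).injective
    rw [← hu, ← ContinuousLinearEquiv.trans_apply, ← hW, sub_add_cancel, ih]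

theorem eq_zero_of_eventually_eq_apply_of_decay {α : Type*} {l : Filter α} [l.NeBot]
    {x : E} {T : α → E →L[ℝ] E} {v : α → E} {K B : ℝ} {s : α → ℝ}
    (hs : Tendsto s l atTop) (hT : ∀ᶠ m in l, ‖T m‖ ≤ K * Real.exp (-s m))
    (hv : ∀ m, ‖v m‖ ≤ B) (hx : ∀ᶠ m in l, x = T m (v m)) : x = 0 := by
  have hlim : Tendsto (fun m => K * Real.exp (-s m) * B) l (nhds 0) := by
    simpa using
      ((Real.tendsto_exp_atBot.comp (tendsto_neg_atTop_atBot.comp hs)).const_mul K).mul_const B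
  refine norm_le_zero_iff.mp (ge_of_tendsto hlim ((hx.and hT).mono fun m ⟨hxm, hTm⟩ => ?_))
  rw [hxm]
  exact (T m).le_of_opNorm_le_of_le hTm (hv m)

theorem eq_zero_of_bounded_of_dichotomy (A W : ℤ → E ≃L[ℝ] E)
    (hW : ∀ n : ℤ, W (n + 1) = (W n).trans (A n)) (P : E →L[ℝ] E) (K : ℝ) (a : ℤ → ℝ)
    (hdiv1 : ∀ p : ℤ, Tendsto (fun q : ℤ => ∑ j ∈ Finset.Icc p q, a j) atTop atTop)
    (hdiv2 : ∀ q : ℤ, Tendsto (fun p : ℤ => ∑ j ∈ Finset.Icc p q, a j) atBot atTop)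
    (hged1 : ∀ m n : ℤ, m ≤ n →
      ‖(W n : E →L[ℝ] E) ∘L P ∘L ((W m).symm : E →L[ℝ] E)‖ ≤ K * Real.exp (-(S a m n)))
    (hged2 : ∀ m n : ℤ, n < m →
      ‖(W n : E →L[ℝ] E) ∘L (1 - P) ∘L ((W m).symm : E →L[ℝ] E)‖ ≤ K * Real.exp (-(S a n m)))
    {u : ℤ → E} (hu : ∀ n : ℤ, u (n + 1) = A n (u n)) (hbdd : ∃ B, ∀ n, ‖u n‖ ≤ B) :
    u = 0 := by
  obtain ⟨B, hB⟩ := hbdd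
  set c := (W 0).symm (u 0)
  have hWc : ∀ m, u m = W m c := eq_apply_symm_of_forall_succ A W hW hu
  have hstable : W 0 (P c) = 0 :=
    eq_zero_of_eventually_eq_apply_of_decay (hdiv2 0) (eventually_le_atBot 0 |>.mono (hged1 · 0))
      hB (Eventually.of_forall fun m => by simp [hWc m])
  have hunstable : W 0 ((1 - P) c) = 0 :=
    eq_zero_of_eventually_eq_apply_of_decay (hdiv1 0)
      (eventually_gt_atTop 0 |>.mono (hged2 · 0)) hB (Eventually.of_forall fun m => by simp [hWc m])
  have hc : c = 0 := by
    have : W 0 c = W 0 (P c) + W 0 ((1 - P) c) := by simp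
    rw [hstable, hunstable, add_zero] at this
    exact (W 0).map_eq_zero_iff.mp this
  funext m
  simp [hWc m, hc]

end Homogeneous

section GreenFunction

variable {d : ℕ}

theorem norm_Green_apply_le_Nterm (W : ℤ → Euc d ≃L[ℝ] Euc d) (P : Euc d →L[ℝ] Euc d)
    (K : ℝ) (a : ℤ → ℝ)
    (hged1 : ∀ m n : ℤ, m ≤ n →
      ‖(W n : Euc d →L[ℝ] Euc d) ∘L P ∘L ((W m).symm : Euc d →L[ℝ] Euc d)‖
        ≤ K * Real.exp (-(S a m n)))
    (hged2 : ∀ m n : ℤ, n < m →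
      ‖(W n : Euc d →L[ℝ] Euc d) ∘L (1 - P) ∘L ((W m).symm : Euc d →L[ℝ] Euc d)‖
        ≤ K * Real.exp (-(S a n m)))
    (q : ℤ → Euc d) (n m : ℤ) :
    ‖Green W P n (m + 1) (q m)‖ ≤ Nterm K a n (fun m => ‖q m‖) m := by
  unfold Green Nterm
  by_cases h : m < n
  · rw [if_pos (by omega), if_pos h]
    exact le_of_opNorm_le _ (hged1 (m + 1) n (by omega)) _
  · rw [if_neg (by omega), if_neg h, neg_apply, norm_neg]
    exact le_of_opNorm_le _ (hged2 (m + 1) n (by omega)) _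

theorem Green_succ_apply (A W : ℤ → Euc d ≃L[ℝ] Euc d)
    (hW : ∀ n : ℤ, W (n + 1) = (W n).trans (A n)) (P : Euc d →L[ℝ] Euc d) (n m : ℤ)
    (x : Euc d) :
    Green W P (n + 1) (m + 1) x = A n (Green W P n (m + 1) x) + if m = n then x else 0 := by
  unfold Green
  rcases lt_trichotomy m n with h | rfl | h
  · rw [if_pos (by omega), if_pos (by omega)]
    simp [h.ne, hW n]
  · simp [hW m]
  · rw [if_neg (by omega), if_neg (by omega)]
    simp [h.ne', hW n]

theorem tsum_Green_apply_succ (A W : ℤ → Euc d ≃L[ℝ] Euc d)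
    (hW : ∀ n : ℤ, W (n + 1) = (W n).trans (A n)) (P : Euc d →L[ℝ] Euc d) (q : ℤ → Euc d)
    (n : ℤ) (hsum : Summable (fun m : ℤ => Green W P n (m + 1) (q m))) :
    ∑' m : ℤ, Green W P (n + 1) (m + 1) (q m)
      = A n (∑' m : ℤ, Green W P n (m + 1) (q m)) + q n := by
  have hsource : HasSum (fun m : ℤ => if m = n then q m else 0) (q n) := by
    simpa using hasSum_single n fun m (hm : m ≠ n) => if_neg hm
  simp_rw [Green_succ_apply A W hW]
  exact ((A n).hasSum'.mpr hsum.hasSum |>.add hsource).tsum_eq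

end GreenFunction

theorem ged_unique_bounded_solution_general {d : ℕ}
    (A W : ℤ → Euc d ≃L[ℝ] Euc d)
    (hW : ∀ n : ℤ, W (n + 1) = (W n).trans (A n))
    (P : Euc d →L[ℝ] Euc d)
    (K : ℝ)
    (a : ℤ → ℝ)
    (hdiv1 : ∀ p : ℤ, Tendsto (fun q : ℤ => ∑ j ∈ Finset.Icc p q, a j) atTop atTop)
    (hdiv2 : ∀ q : ℤ, Tendsto (fun p : ℤ => ∑ j ∈ Finset.Icc p q, a j) atBot atTop)
    (hged1 : ∀ m n : ℤ, m ≤ n →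
      ‖(W n : Euc d →L[ℝ] Euc d) ∘L P ∘L ((W m).symm : Euc d →L[ℝ] Euc d)‖
        ≤ K * Real.exp (-(S a m n)))
    (hged2 : ∀ m n : ℤ, n < m →
      ‖(W n : Euc d →L[ℝ] Euc d) ∘L (1 - P) ∘L ((W m).symm : Euc d →L[ℝ] Euc d)‖
        ≤ K * Real.exp (-(S a n m)))
    (q : ℤ → Euc d)
    (hqsum : ∀ n : ℤ, Summable (Nterm K a n (fun m => ‖q m‖)))
    (hqbdd : ∃ C : ℝ, ∀ n : ℤ, Nmap K a n (fun m => ‖q m‖) ≤ C) :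
    (∀ n : ℤ, Summable (fun m : ℤ => Green W P n (m + 1) (q m))) ∧
    ∀ z : ℤ → Euc d,
      ((∀ n : ℤ, z (n + 1) = A n (z n) + q n) ∧ (∃ C : ℝ, ∀ n : ℤ, ‖z n‖ ≤ C)) ↔
        z = fun n : ℤ => ∑' m : ℤ, Green W P n (m + 1) (q m) := by
  have hterm n := norm_Green_apply_le_Nterm W P K a hged1 hged2 q n
  have hsum n := (hqsum n).of_norm_bounded (hterm n)
  set φ : ℤ → Euc d := fun n => ∑' m : ℤ, Green W P n (m + 1) (q m)
  have hφ_solves n : φ (n + 1) = A n (φ n) + q n := tsum_Green_apply_succ A W hW P q n (hsum n)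
  obtain ⟨C, hC⟩ := hqbdd
  have hφ_bdd n : ‖φ n‖ ≤ C :=
    (tsum_of_norm_bounded (hqsum n).hasSum (hterm n)).trans (hC n)
  refine ⟨hsum, fun z => ⟨fun ⟨hz_solves, Cz, hz_bdd⟩ => ?_, ?_⟩⟩
  · have hdiff : z - φ = 0 :=
      eq_zero_of_bounded_of_dichotomy A W hW P K a hdiv1 hdiv2 hged1 hged2
        (fun n => by simp only [Pi.sub_apply, hz_solves, hφ_solves, map_sub]; abel)
        ⟨Cz + C, fun n => norm_sub_le_of_le (hz_bdd n) (hφ_bdd n)⟩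
    exact sub_eq_zero.mp hdiff
  · rintro rfl
    exact ⟨hφ_solves, C, hφ_bdd⟩

theorem ged_unique_bounded_solution {d : ℕ}
    (A W : ℤ → Euc d ≃L[ℝ] Euc d)
    (hW : ∀ n : ℤ, W (n + 1) = (W n).trans (A n))
    (P : Euc d →L[ℝ] Euc d) (hP : P ∘L P = P)
    (K : ℝ) (hK : 1 ≤ K)
    (a : ℤ → ℝ) (ha : ∀ j : ℤ, 0 ≤ a j)
    (hdiv1 : ∀ p : ℤ, Tendsto (fun q : ℤ => ∑ j ∈ Finset.Icc p q, a j) atTop atTop)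
    (hdiv2 : ∀ q : ℤ, Tendsto (fun p : ℤ => ∑ j ∈ Finset.Icc p q, a j) atBot atTop)
    (hged1 : ∀ m n : ℤ, m ≤ n →
      ‖(W n : Euc d →L[ℝ] Euc d) ∘L P ∘L ((W m).symm : Euc d →L[ℝ] Euc d)‖
        ≤ K * Real.exp (-(S a m n)))
    (hged2 : ∀ m n : ℤ, n < m →
      ‖(W n : Euc d →L[ℝ] Euc d) ∘L (1 - P) ∘L ((W m).symm : Euc d →L[ℝ] Euc d)‖
        ≤ K * Real.exp (-(S a n m)))
    (q : ℤ → Euc d)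
    (hqsum : ∀ n : ℤ, Summable (Nterm K a n (fun m => ‖q m‖)))
    (hqbdd : ∃ C : ℝ, ∀ n : ℤ, Nmap K a n (fun m => ‖q m‖) ≤ C) :
    (∀ n : ℤ, Summable (fun m : ℤ => Green W P n (m + 1) (q m))) ∧
    ∀ z : ℤ → Euc d,
      ((∀ n : ℤ, z (n + 1) = A n (z n) + q n) ∧ (∃ C : ℝ, ∀ n : ℤ, ‖z n‖ ≤ C)) ↔
        z = fun n : ℤ => ∑' m : ℤ, Green W P n (m + 1) (q m) :=
  ged_unique_bounded_solution_general A W hW P K a hdiv1 hdiv2 hged1 hged2 q hqsum hqbdd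
end

section
/- Suppose $z_{n+1} = A_n z_n$ has a generalized exponential dichotomy, and $q : \mathbb{Z} \times \mathbb{R}^d \to \mathbb{R}^d$ satisfies $|q(n,z)| \leq Q_n$ and $|q(n,z) - q(n,\tilde z)| \leq r_n |z - \tilde z|$ for all $n, z, \tilde z$, where $N(n,Q) \leq \tilde B$ and $N(n,r) \leq \theta < 1$ for all $n$. Then the nonlinear system $z_{n+1} = A_n z_n + q(n, z_n)$ has a unique solution bounded on $\mathbb{Z}$, which satisfies the fixed-point equation $\varphi^*_n = \sum_{k=-\infty}^{\infty} G(n, k+1) q(k, \varphi^*_k)$ and $|\varphi^*_n| \leq \tilde B$ for all $n$. -/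
open Finset Filter ContinuousLinearMap

/-!
Summing the forcing term against the Green function solves the inhomogeneous equation:
`y n = ∑' k, G(n, k+1) g k` satisfies `y (n+1) = A n (y n) + g n`. The dichotomy estimates bound
`‖G(n, k+1)‖` by the weights of `N(n, ·)`, so `z ↦ (n ↦ ∑' k, G(n, k+1) q(k, z k))` maps bounded
sequences into the ball of radius `B'` and is a `θ`-contraction for the sup norm; its fixed point
is the bounded solution. Conversely, if `z` is a bounded solution, then `w = z - (image of z)` is a
bounded solution of the homogeneous equation, hence `w n = W n v`; the dichotomy bounds `‖P v‖`
and `‖(1 - P) v‖` by `K e^{-S} sup ‖w‖` with `S → ∞` as the window grows, so `v = 0` and `z` is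
the fixed point.
-/

open Topology
open scoped BoundedContinuousFunction

lemma nonneg_of_norm_sub_le_mul {E F : Type*} [NormedAddCommGroup E] [Nontrivial E]
    [SeminormedAddCommGroup F] {f : E → F} {L : ℝ}
    (hf : ∀ z z', ‖f z - f z'‖ ≤ L * ‖z - z'‖) : 0 ≤ L := by
  obtain ⟨z, hz⟩ := exists_ne (0 : E)
  have := (norm_nonneg _).trans (hf z 0)
  rw [sub_zero] at this
  exact nonneg_of_mul_nonneg_left this (norm_pos_iff.2 hz)

section Kernel

variable {E : Type*} [NormedAddCommGroup E] [NormedSpace ℝ E]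
  {G : ℤ → ℤ → E →L[ℝ] E} {c : ℤ → ℤ → ℝ} {q : ℤ → E → E} {Q r : ℤ → ℝ}

lemma norm_kernel_apply_le (hG : ∀ n k, ‖G n k‖ ≤ c n k) (hQ : ∀ k z, ‖q k z‖ ≤ Q k)
    (z : ℤ → E) (n k : ℤ) : ‖G n k (q k (z k))‖ ≤ c n k * Q k :=
  le_of_opNorm_le_of_le _ (hG n k) (hQ k (z k))

lemma norm_tsum_kernel_apply_le (hG : ∀ n k, ‖G n k‖ ≤ c n k) (hQ : ∀ k z, ‖q k z‖ ≤ Q k)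
    (hQsum : ∀ n, Summable fun k => c n k * Q k) (z : ℤ → E) (n : ℤ) :
    ‖∑' k, G n k (q k (z k))‖ ≤ ∑' k, c n k * Q k :=
  tsum_of_norm_bounded (hQsum n).hasSum (norm_kernel_apply_le hG hQ z n)

variable [CompleteSpace E]

lemma summable_kernel_apply (hG : ∀ n k, ‖G n k‖ ≤ c n k) (hQ : ∀ k z, ‖q k z‖ ≤ Q k)
    (hQsum : ∀ n, Summable fun k => c n k * Q k) (z : ℤ → E) (n : ℤ) :
    Summable fun k => G n k (q k (z k)) :=
  .of_norm_bounded (hQsum n) (norm_kernel_apply_le hG hQ z n)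

lemma norm_tsum_kernel_apply_sub_le (hG : ∀ n k, ‖G n k‖ ≤ c n k)
    (hQ : ∀ k z, ‖q k z‖ ≤ Q k) (hQsum : ∀ n, Summable fun k => c n k * Q k)
    (hr : ∀ k z z', ‖q k z - q k z'‖ ≤ r k * ‖z - z'‖) (hr0 : ∀ k, 0 ≤ r k)
    (hrsum : ∀ n, Summable fun k => c n k * r k) {z z' : ℤ → E} {D : ℝ}
    (hD : ∀ k, ‖z k - z' k‖ ≤ D) (n : ℤ) :
    ‖∑' k, G n k (q k (z k)) - ∑' k, G n k (q k (z' k))‖ ≤ (∑' k, c n k * r k) * D := by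
  rw [← (summable_kernel_apply hG hQ hQsum z n).tsum_sub (summable_kernel_apply hG hQ hQsum z' n)]
  refine tsum_of_norm_bounded ((hrsum n).hasSum.mul_right D) fun k => ?_
  rw [← map_sub, mul_assoc]
  exact le_of_opNorm_le_of_le _ (hG n k)
    ((hr k _ _).trans (mul_le_mul_of_nonneg_left (hD k) (hr0 k)))

theorem exists_unique_bounded_fixedPoint_kernel (hG : ∀ n k, ‖G n k‖ ≤ c n k)
    (hQ : ∀ k z, ‖q k z‖ ≤ Q k) (hQsum : ∀ n, Summable fun k => c n k * Q k) {B : ℝ}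
    (hQB : ∀ n, ∑' k, c n k * Q k ≤ B) (hr : ∀ k z z', ‖q k z - q k z'‖ ≤ r k * ‖z - z'‖)
    (hrsum : ∀ n, Summable fun k => c n k * r k) {θ : ℝ}
    (hrθ : ∀ n, ∑' k, c n k * r k ≤ θ) (hθ : θ < 1) :
    ∃ φ : ℤ → E, (∀ n, φ n = ∑' k, G n k (q k (φ k))) ∧
      ∀ z : ℤ → E, (∃ C, ∀ n, ‖z n‖ ≤ C) → (∀ n, z n = ∑' k, G n k (q k (z k))) → z = φ := by
  rcases subsingleton_or_nontrivial E with hE | hE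
  · exact ⟨0, fun _ => Subsingleton.elim _ _, fun _ _ _ => Subsingleton.elim _ _⟩
  have hr0 k : 0 ≤ r k := nonneg_of_norm_sub_le_mul (hr k)
  have hθ0 : 0 ≤ θ := (tsum_nonneg fun k =>
    mul_nonneg ((norm_nonneg _).trans (hG 0 k)) (hr0 k)).trans (hrθ 0)
  let T : (ℤ →ᵇ E) → (ℤ →ᵇ E) := fun z =>
    .ofNormedAddCommGroup (fun n => ∑' k, G n k (q k (z k))) continuous_of_discreteTopology B
      fun n => (norm_tsum_kernel_apply_le hG hQ hQsum z n).trans (hQB n)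
  have hT : ContractingWith θ.toNNReal T := by
    refine ⟨by simpa using hθ, .of_dist_le_mul fun z z' => ?_⟩
    rw [Real.coe_toNNReal _ hθ0, BoundedContinuousFunction.dist_le (by positivity)]
    intro n
    rw [dist_eq_norm]
    refine (norm_tsum_kernel_apply_sub_le hG hQ hQsum hr hr0 hrsum (fun k => ?_) n).trans
      (mul_le_mul_of_nonneg_right (hrθ n) dist_nonneg)
    rw [← dist_eq_norm]
    exact BoundedContinuousFunction.dist_coe_le_dist k
  set φ := hT.fixedPoint T
  have hfix : T φ = φ := hT.fixedPoint_isFixedPt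
  refine ⟨φ, fun n => (DFunLike.congr_fun hfix n).symm, fun z ⟨C, hC⟩ hz => ?_⟩
  let zb : ℤ →ᵇ E := .ofNormedAddCommGroup z continuous_of_discreteTopology C hC
  have hzb : T zb = zb := BoundedContinuousFunction.ext fun n => (hz n).symm
  exact congrArg DFunLike.coe (hT.fixedPoint_unique hzb)

end Kernel

noncomputable def dichotomyWeight (K : ℝ) (a : ℤ → ℝ) (n k : ℤ) : ℝ :=
  if k < n then K * Real.exp (-(S a (k + 1) n)) else K * Real.exp (-(S a n (k + 1)))

lemma Nmap_eq_tsum (K : ℝ) (a : ℤ → ℝ) (n : ℤ) (g : ℤ → ℝ) :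
    Nmap K a n g = ∑' k, dichotomyWeight K a n k * g k :=
  tsum_congr fun _ => (ite_mul ..).symm

lemma Nterm_eq_mul (K : ℝ) (a : ℤ → ℝ) (n : ℤ) (g : ℤ → ℝ) :
    Nterm K a n g = fun k => dichotomyWeight K a n k * g k :=
  funext fun _ => (ite_mul ..).symm

lemma eq_zero_of_norm_le_mul_exp_neg {E α : Type*} [NormedAddCommGroup E] {l : Filter α}
    [l.NeBot] {s : α → ℝ} (hs : Tendsto s l atTop) {x : E} {C M : ℝ}
    (hx : ∀ᶠ m in l, ‖x‖ ≤ C * Real.exp (-s m) * M) : x = 0 := by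
  have hlim : Tendsto (fun m => C * Real.exp (-s m) * M) l (𝓝 0) := by
    simpa using ((Real.tendsto_exp_neg_atTop_nhds_zero.comp hs).const_mul C).mul_const M
  exact norm_le_zero_iff.1 (ge_of_tendsto hlim hx)

section Dichotomy

variable {d : ℕ} {A W : ℤ → Euc d ≃L[ℝ] Euc d} {P : Euc d →L[ℝ] Euc d}

lemma norm_green_le {K : ℝ} {a : ℤ → ℝ}
    (hged1 : ∀ m n : ℤ, m ≤ n →
      ‖(W n : Euc d →L[ℝ] Euc d) ∘L P ∘L ((W m).symm : Euc d →L[ℝ] Euc d)‖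
        ≤ K * Real.exp (-(S a m n)))
    (hged2 : ∀ m n : ℤ, n < m →
      ‖(W n : Euc d →L[ℝ] Euc d) ∘L (1 - P) ∘L ((W m).symm : Euc d →L[ℝ] Euc d)‖
        ≤ K * Real.exp (-(S a n m)))
    (n k : ℤ) : ‖Green W P n (k + 1)‖ ≤ dichotomyWeight K a n k := by
  unfold Green dichotomyWeight
  by_cases h : k < n
  · rw [if_pos (by omega), if_pos h]
    exact hged1 (k + 1) n (by omega)
  · rw [if_neg (by omega), if_neg h, norm_neg]
    exact hged2 (k + 1) n (by omega)

lemma green_succ_apply (hW : ∀ n : ℤ, W (n + 1) = (W n).trans (A n)) (n m : ℤ) (x : Euc d) :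
    Green W P (n + 1) m x = A n (Green W P n m x) + if m = n + 1 then x else 0 := by
  have hWA (y : Euc d) : W (n + 1) y = A n (W n y) := by rw [hW n]; rfl
  rcases lt_trichotomy m (n + 1) with h | rfl | h
  · simp [Green, if_pos (by omega : m ≤ n), if_pos (by omega : m ≤ n + 1), if_neg h.ne, ← hWA]
  · simp [Green, ← hWA]
  · simp [Green, if_neg (by omega : ¬ m ≤ n), if_neg (by omega : ¬ m ≤ n + 1), if_neg h.ne', ← hWA]

lemma tsum_green_succ (hW : ∀ n : ℤ, W (n + 1) = (W n).trans (A n)) {g : ℤ → Euc d} {n : ℤ}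
    (hg : Summable fun k => Green W P n (k + 1) (g k)) :
    ∑' k, Green W P (n + 1) (k + 1) (g k) = A n (∑' k, Green W P n (k + 1) (g k)) + g n := by
  simp only [green_succ_apply hW, add_left_inj]
  have hsingle := hasSum_single (f := fun k => if k = n then g k else 0) n fun _ hk => if_neg hk
  rw [(((A n).hasSum'.2 hg.hasSum).add hsingle).tsum_eq, if_pos rfl]

lemma exists_eq_apply_of_homogeneous (hW : ∀ n : ℤ, W (n + 1) = (W n).trans (A n))
    {w : ℤ → Euc d} (hw : ∀ n, w (n + 1) = A n (w n)) : ∃ v, ∀ n, w n = W n v := by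
  have step (n : ℤ) : (W (n + 1)).symm (w (n + 1)) = (W n).symm (w n) := by
    rw [hw, hW, ContinuousLinearEquiv.symm_trans_apply, ContinuousLinearEquiv.symm_apply_apply]
  refine ⟨(W 0).symm (w 0), fun n => (W n).symm_apply_eq.1 ?_⟩
  induction n using Int.induction_on with
  | zero => rfl
  | succ i ih => rw [step, ih]
  | pred i ih => rw [← ih, ← step, sub_add_cancel]

theorem eq_zero_of_bounded_homogeneous (hW : ∀ n : ℤ, W (n + 1) = (W n).trans (A n))
    {K : ℝ} {a : ℤ → ℝ}
    (hdiv1 : ∀ p : ℤ, Tendsto (fun q : ℤ => ∑ j ∈ Finset.Icc p q, a j) atTop atTop)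
    (hdiv2 : ∀ q : ℤ, Tendsto (fun p : ℤ => ∑ j ∈ Finset.Icc p q, a j) atBot atTop)
    (hged1 : ∀ m n : ℤ, m ≤ n →
      ‖(W n : Euc d →L[ℝ] Euc d) ∘L P ∘L ((W m).symm : Euc d →L[ℝ] Euc d)‖
        ≤ K * Real.exp (-(S a m n)))
    (hged2 : ∀ m n : ℤ, n < m →
      ‖(W n : Euc d →L[ℝ] Euc d) ∘L (1 - P) ∘L ((W m).symm : Euc d →L[ℝ] Euc d)‖
        ≤ K * Real.exp (-(S a n m)))
    {w : ℤ → Euc d} (hw : ∀ n, w (n + 1) = A n (w n)) {M : ℝ} (hM : ∀ n, ‖w n‖ ≤ M) :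
    w = 0 := by
  obtain ⟨v, hv⟩ := exists_eq_apply_of_homogeneous hW hw
  have hstable : W 0 (P v) = 0 :=
    eq_zero_of_norm_le_mul_exp_neg (s := (S a · 0)) (hdiv2 0) <|
      eventually_atBot.2 ⟨0, fun m hm => by
        simpa [hv m] using le_of_opNorm_le_of_le _ (hged1 m 0 hm) (hM m)⟩
  have hunstable : W 0 (v - P v) = 0 :=
    eq_zero_of_norm_le_mul_exp_neg (s := S a 0) (hdiv1 0) <|
      eventually_atTop.2 ⟨1, fun m hm => by
        simpa [hv m] using le_of_opNorm_le_of_le _ (hged2 m 0 hm) (hM m)⟩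
  simp only [map_eq_zero_iff _ (W 0).injective, sub_eq_zero] at hstable hunstable
  funext n
  rw [hv n, hunstable, hstable, map_zero, Pi.zero_apply]

theorem eq_tsum_green_of_bounded_solution (hW : ∀ n : ℤ, W (n + 1) = (W n).trans (A n))
    {K : ℝ} {a : ℤ → ℝ}
    (hdiv1 : ∀ p : ℤ, Tendsto (fun q : ℤ => ∑ j ∈ Finset.Icc p q, a j) atTop atTop)
    (hdiv2 : ∀ q : ℤ, Tendsto (fun p : ℤ => ∑ j ∈ Finset.Icc p q, a j) atBot atTop)
    (hged1 : ∀ m n : ℤ, m ≤ n →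
      ‖(W n : Euc d →L[ℝ] Euc d) ∘L P ∘L ((W m).symm : Euc d →L[ℝ] Euc d)‖
        ≤ K * Real.exp (-(S a m n)))
    (hged2 : ∀ m n : ℤ, n < m →
      ‖(W n : Euc d →L[ℝ] Euc d) ∘L (1 - P) ∘L ((W m).symm : Euc d →L[ℝ] Euc d)‖
        ≤ K * Real.exp (-(S a n m)))
    {z g : ℤ → Euc d} (hz : ∀ n, z (n + 1) = A n (z n) + g n) {C C' : ℝ} (hzC : ∀ n, ‖z n‖ ≤ C)
    (hg : ∀ n, Summable fun k => Green W P n (k + 1) (g k))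
    (hgC : ∀ n, ‖∑' k, Green W P n (k + 1) (g k)‖ ≤ C') (n : ℤ) :
    z n = ∑' k, Green W P n (k + 1) (g k) := by
  have hdiff := eq_zero_of_bounded_homogeneous hW hdiv1 hdiv2 hged1 hged2
    (w := fun n => z n - ∑' k, Green W P n (k + 1) (g k)) (M := C + C')
    (fun n => by simp only [hz, tsum_green_succ hW (hg n), map_sub]; abel)
    (fun n => (norm_sub_le _ _).trans (add_le_add (hzC n) (hgC n)))
  exact sub_eq_zero.1 (congrFun hdiff n)

end Dichotomy

theorem ged_nonlinear_unique_bounded_solution_general {d : ℕ}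
    (A W : ℤ → Euc d ≃L[ℝ] Euc d)
    (hW : ∀ n : ℤ, W (n + 1) = (W n).trans (A n))
    (P : Euc d →L[ℝ] Euc d)
    (K : ℝ)
    (a : ℤ → ℝ)
    (hdiv1 : ∀ p : ℤ, Tendsto (fun q : ℤ => ∑ j ∈ Finset.Icc p q, a j) atTop atTop)
    (hdiv2 : ∀ q : ℤ, Tendsto (fun p : ℤ => ∑ j ∈ Finset.Icc p q, a j) atBot atTop)
    (hged1 : ∀ m n : ℤ, m ≤ n →
      ‖(W n : Euc d →L[ℝ] Euc d) ∘L P ∘L ((W m).symm : Euc d →L[ℝ] Euc d)‖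
        ≤ K * Real.exp (-(S a m n)))
    (hged2 : ∀ m n : ℤ, n < m →
      ‖(W n : Euc d →L[ℝ] Euc d) ∘L (1 - P) ∘L ((W m).symm : Euc d →L[ℝ] Euc d)‖
        ≤ K * Real.exp (-(S a n m)))
    (q : ℤ → Euc d → Euc d) (Q r : ℤ → ℝ)
    (hQ : ∀ (n : ℤ) (z : Euc d), ‖q n z‖ ≤ Q n)
    (hr : ∀ (n : ℤ) (z z' : Euc d), ‖q n z - q n z'‖ ≤ r n * ‖z - z'‖)
    (B' θ : ℝ)
    (hQsum : ∀ n : ℤ, Summable (Nterm K a n Q))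
    (hrsum : ∀ n : ℤ, Summable (Nterm K a n r))
    (hNQ : ∀ n : ℤ, Nmap K a n Q ≤ B')
    (hNr : ∀ n : ℤ, Nmap K a n r ≤ θ) (hθ : θ < 1) :
    ∃ φ : ℤ → Euc d,
      (∀ n : ℤ, φ (n + 1) = A n (φ n) + q n (φ n)) ∧
      (∃ C : ℝ, ∀ n : ℤ, ‖φ n‖ ≤ C) ∧
      (∀ z : ℤ → Euc d,
        (∀ n : ℤ, z (n + 1) = A n (z n) + q n (z n)) → (∃ C : ℝ, ∀ n : ℤ, ‖z n‖ ≤ C) →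
          z = φ) ∧
      (∀ n : ℤ, φ n = ∑' k : ℤ, Green W P n (k + 1) (q k (φ k))) ∧
      (∀ n : ℤ, ‖φ n‖ ≤ B') := by
  simp only [Nterm_eq_mul] at hQsum hrsum
  simp only [Nmap_eq_tsum] at hNQ hNr
  have hG := norm_green_le hged1 hged2
  obtain ⟨φ, hφ, hφ_unique⟩ :=
    exists_unique_bounded_fixedPoint_kernel hG hQ hQsum hNQ hr hrsum hNr hθ
  have hsum (z : ℤ → Euc d) (n : ℤ) := summable_kernel_apply hG hQ hQsum z n
  have hB' (z : ℤ → Euc d) (n : ℤ) : ‖∑' k, Green W P n (k + 1) (q k (z k))‖ ≤ B' :=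
    (norm_tsum_kernel_apply_le hG hQ hQsum z n).trans (hNQ n)
  have hφB' n : ‖φ n‖ ≤ B' := hφ n ▸ hB' φ n
  refine ⟨φ, fun n => ?_, ⟨B', hφB'⟩, fun z hz ⟨C, hzC⟩ => ?_, hφ, hφB'⟩
  · rw [hφ (n + 1), tsum_green_succ hW (hsum φ n), ← hφ n]
  · exact hφ_unique z ⟨C, hzC⟩
      (eq_tsum_green_of_bounded_solution hW hdiv1 hdiv2 hged1 hged2 hz hzC (hsum z) (hB' z))

theorem ged_nonlinear_unique_bounded_solution {d : ℕ}
    (A W : ℤ → Euc d ≃L[ℝ] Euc d)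
    (hW : ∀ n : ℤ, W (n + 1) = (W n).trans (A n))
    (P : Euc d →L[ℝ] Euc d) (hP : P ∘L P = P)
    (K : ℝ) (hK : 1 ≤ K)
    (a : ℤ → ℝ) (ha : ∀ j : ℤ, 0 ≤ a j)
    (hdiv1 : ∀ p : ℤ, Tendsto (fun q : ℤ => ∑ j ∈ Finset.Icc p q, a j) atTop atTop)
    (hdiv2 : ∀ q : ℤ, Tendsto (fun p : ℤ => ∑ j ∈ Finset.Icc p q, a j) atBot atTop)
    (hged1 : ∀ m n : ℤ, m ≤ n →
      ‖(W n : Euc d →L[ℝ] Euc d) ∘L P ∘L ((W m).symm : Euc d →L[ℝ] Euc d)‖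
        ≤ K * Real.exp (-(S a m n)))
    (hged2 : ∀ m n : ℤ, n < m →
      ‖(W n : Euc d →L[ℝ] Euc d) ∘L (1 - P) ∘L ((W m).symm : Euc d →L[ℝ] Euc d)‖
        ≤ K * Real.exp (-(S a n m)))
    (q : ℤ → Euc d → Euc d) (Q r : ℤ → ℝ)
    (hQ : ∀ (n : ℤ) (z : Euc d), ‖q n z‖ ≤ Q n)
    (hr : ∀ (n : ℤ) (z z' : Euc d), ‖q n z - q n z'‖ ≤ r n * ‖z - z'‖)
    (B' θ : ℝ)
    (hQsum : ∀ n : ℤ, Summable (Nterm K a n Q))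
    (hrsum : ∀ n : ℤ, Summable (Nterm K a n r))
    (hNQ : ∀ n : ℤ, Nmap K a n Q ≤ B')
    (hNr : ∀ n : ℤ, Nmap K a n r ≤ θ) (hθ : θ < 1) :
    ∃ φ : ℤ → Euc d,
      (∀ n : ℤ, φ (n + 1) = A n (φ n) + q n (φ n)) ∧
      (∃ C : ℝ, ∀ n : ℤ, ‖φ n‖ ≤ C) ∧
      (∀ z : ℤ → Euc d,
        (∀ n : ℤ, z (n + 1) = A n (z n) + q n (z n)) → (∃ C : ℝ, ∀ n : ℤ, ‖z n‖ ≤ C) →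
          z = φ) ∧
      (∀ n : ℤ, φ n = ∑' k : ℤ, Green W P n (k + 1) (q k (φ k))) ∧
      (∀ n : ℤ, ‖φ n‖ ≤ B') :=
  ged_nonlinear_unique_bounded_solution_general A W hW P K a hdiv1 hdiv2 hged1 hged2 q Q r hQ hr B'
    θ hQsum hrsum hNQ hNr hθ
end

section
/- Suppose $z_{n+1}=A_nz_n$ has a generalized exponential dichotomy and $f, g$ satisfy: $|f(n,x)| \leq F_n$, $|g(n,x)| \leq G_n$ with $N(n, G+F) \leq B$, and both are $r_n$-Lipschitz in $x$ with $N(n,r) \leq \theta < 1$. Then for every $(m,\xi)$, the system $w_{n+1} = A_n w_n - f(n, x(n,m,\xi)) + g(n, w_n + x(n,m,\xi))$ has a unique bounded solution $\chi(\cdot;(m,\xi))$, and it satisfies $|\chi(n;(m,\xi))| \leq B$ for all $n$. -/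
open Finset Filter ContinuousLinearMap

/-!
Fixed points of the Lyapunov–Perron operator `w ↦ (n ↦ ∑' m, Green n (m + 1) (h m (w m)))`, with
`h n v = g n (v + x n) - f n (x n)`, are exactly the bounded solutions of the auxiliary system.
The dichotomy estimates bound the Green function by the weights of `N(n, ·)`, so `N(n, G + F) ≤ B`
makes the operator map every sequence into the ball of radius `B` and `N(n, r) ≤ θ < 1` makes it a
contraction for the sup distance; Banach's theorem gives the solution. A bounded solution minus its
image under the operator is a bounded solution of `z (n + 1) = A n (z n)`, i.e. `W n c`; the
dichotomy estimates and the divergence of `∑ a_j` in both directions force `P c = (1 - P) c = 0`.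
-/

open scoped Topology BoundedContinuousFunction

structure DichotomyEstimates {d : ℕ} (W : ℤ → Euc d ≃L[ℝ] Euc d) (P : Euc d →L[ℝ] Euc d)
    (K : ℝ) (a : ℤ → ℝ) : Prop where
  stable : ∀ m n : ℤ, m ≤ n →
    ‖(W n : Euc d →L[ℝ] Euc d) ∘L P ∘L ((W m).symm : Euc d →L[ℝ] Euc d)‖
      ≤ K * Real.exp (-(S a m n))
  unstable : ∀ m n : ℤ, n < m →
    ‖(W n : Euc d →L[ℝ] Euc d) ∘L (1 - P) ∘L ((W m).symm : Euc d →L[ℝ] Euc d)‖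
      ≤ K * Real.exp (-(S a n m))

section

variable {d : ℕ} {A W : ℤ → Euc d ≃L[ℝ] Euc d} {P : Euc d →L[ℝ] Euc d} {K : ℝ} {a : ℤ → ℝ}

lemma nterm_mul_const (n : ℤ) (g : ℤ → ℝ) (c : ℝ) :
    Nterm K a n (fun m => g m * c) = fun m => Nterm K a n g m * c := by
  funext m
  unfold Nterm
  split_ifs <;> ring

lemma nmap_mul_const (n : ℤ) (g : ℤ → ℝ) (c : ℝ) :
    Nmap K a n (fun m => g m * c) = Nmap K a n g * c := by
  rw [Nmap, nterm_mul_const, tsum_mul_right, Nmap]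

lemma nterm_nonneg (hK : 0 ≤ K) {n : ℤ} {g : ℤ → ℝ} {m : ℤ} (hg : 0 ≤ g m) :
    0 ≤ Nterm K a n g m := by
  unfold Nterm
  split_ifs <;> positivity

lemma green_succ_succ_apply (hW : ∀ n : ℤ, W (n + 1) = (W n).trans (A n)) (n m : ℤ) (v : Euc d) :
    Green W P (n + 1) (m + 1) v = A n (Green W P n (m + 1) v) + if m = n then v else 0 := by
  have hWA : ∀ y, W (n + 1) y = A n (W n y) := fun y => by rw [hW n]; rfl
  unfold Green
  rcases lt_trichotomy m n with hmn | rfl | hmn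
  · rw [if_pos (by omega), if_pos (by omega), if_neg hmn.ne, add_zero]
    simp only [comp_apply, ContinuousLinearEquiv.coe_coe, hWA]
  · -- the jump across the diagonal is `W (m + 1) (P + (1 - P)) (W (m + 1))⁻¹ = 1`
    rw [if_pos le_rfl, if_neg (by omega), if_pos rfl]
    simp only [neg_apply, comp_apply, ContinuousLinearEquiv.coe_coe, sub_apply, one_apply_eq_self,
      map_neg, map_sub, ← hWA, ContinuousLinearEquiv.apply_symm_apply]
    abel
  · rw [if_neg (by omega), if_neg (by omega), if_neg hmn.ne', add_zero]
    simp only [neg_apply, comp_apply, ContinuousLinearEquiv.coe_coe, map_neg, hWA]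

lemma DichotomyEstimates.norm_green_apply_le (hD : DichotomyEstimates W P K a)
    {n m : ℤ} {v : Euc d} {c : ℤ → ℝ} (hv : ‖v‖ ≤ c m) :
    ‖Green W P n (m + 1) v‖ ≤ Nterm K a n c m := by
  have hGreen : ‖Green W P n (m + 1)‖ ≤ Nterm K a n (fun _ => 1) m := by
    unfold Green Nterm
    split_ifs with h₁ h₂ h₂
    · rw [mul_one]; exact hD.stable (m + 1) n h₁
    · omega
    · omega
    · rw [norm_neg, mul_one]; exact hD.unstable (m + 1) n (by omega)
  calc ‖Green W P n (m + 1) v‖ ≤ Nterm K a n (fun _ => 1) m * c m :=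
        le_opNorm_of_le _ hv |>.trans (mul_le_mul_of_nonneg_right hGreen ((norm_nonneg _).trans hv))
    _ = Nterm K a n c m := by unfold Nterm; split_ifs <;> ring

variable (W P) in
noncomputable def greenSum (h : ℤ → Euc d) (n : ℤ) : Euc d :=
  ∑' m, Green W P n (m + 1) (h m)

lemma greenSum_succ (hW : ∀ n : ℤ, W (n + 1) = (W n).trans (A n)) {h : ℤ → Euc d} {n : ℤ}
    (hs : Summable fun m => Green W P n (m + 1) (h m)) :
    greenSum W P h (n + 1) = A n (greenSum W P h n) + h n := by
  have hδ : Summable fun m : ℤ => if m = n then h m else 0 :=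
    summable_of_ne_finset_zero (s := {n}) fun m hm => if_neg (by simpa using hm)
  simp only [greenSum, green_succ_succ_apply hW, (A n).map_tsum]
  rw [((A n).summable.mpr hs).tsum_add hδ, tsum_ite_eq]

lemma greenSum_sub {h h' : ℤ → Euc d} {n : ℤ} (hs : Summable fun m => Green W P n (m + 1) (h m))
    (hs' : Summable fun m => Green W P n (m + 1) (h' m)) :
    greenSum W P h n - greenSum W P h' n = greenSum W P (h - h') n := by
  simp only [greenSum, ← hs.tsum_sub hs', Pi.sub_apply, map_sub]

lemma exists_eq_W_apply_of_forall_succ (hW : ∀ n : ℤ, W (n + 1) = (W n).trans (A n))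
    {u : ℤ → Euc d} (hu : ∀ n, u (n + 1) = A n (u n)) : ∃ c, ∀ n, u n = W n c := by
  have hstep : ∀ k : ℤ, (W (k + 1)).symm (u (k + 1)) = (W k).symm (u k) := fun k => by
    rw [hu, hW]
    simp
  refine ⟨(W 0).symm (u 0), fun n => ?_⟩
  have hconst : (W n).symm (u n) = (W 0).symm (u 0) := by
    induction n using Int.induction_on with
    | zero => rfl
    | succ k ih => rw [hstep, ih]
    | pred k ih => rw [← ih, ← hstep, sub_add_cancel]
  rw [← hconst, ContinuousLinearEquiv.apply_symm_apply]

namespace DichotomyEstimates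

lemma summable_green_apply (hD : DichotomyEstimates W P K a) {h : ℤ → Euc d} {c : ℤ → ℝ}
    {n : ℤ} (hh : ∀ m, ‖h m‖ ≤ c m) (hc : Summable (Nterm K a n c)) :
    Summable fun m => Green W P n (m + 1) (h m) :=
  hc.of_norm_bounded fun m => hD.norm_green_apply_le (hh m)

lemma norm_greenSum_le (hD : DichotomyEstimates W P K a) {h : ℤ → Euc d} {c : ℤ → ℝ}
    {n : ℤ} (hh : ∀ m, ‖h m‖ ≤ c m) (hc : Summable (Nterm K a n c)) :
    ‖greenSum W P h n‖ ≤ Nmap K a n c :=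
  tsum_of_norm_bounded hc.hasSum fun m => hD.norm_green_apply_le (hh m)

lemma eq_zero_of_forall_succ_of_bounded (hD : DichotomyEstimates W P K a)
    (hW : ∀ n : ℤ, W (n + 1) = (W n).trans (A n))
    (hdiv1 : ∀ p : ℤ, Tendsto (S a p) atTop atTop)
    (hdiv2 : ∀ q : ℤ, Tendsto (fun p => S a p q) atBot atTop)
    {u : ℤ → Euc d} (hu : ∀ n, u (n + 1) = A n (u n)) {C : ℝ} (hC : ∀ n, ‖u n‖ ≤ C) : u = 0 := by
  obtain ⟨c, hu_eq⟩ := exists_eq_W_apply_of_forall_succ hW hu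
  have hQc : W 0 ((1 - P) c) = 0 := by
    have hlim : Tendsto (fun n => K * Real.exp (-(S a 0 n)) * C) atTop (𝓝 0) := by
      simpa using ((Real.tendsto_exp_comp_nhds_zero.mpr
        (tendsto_neg_atBot_iff.mpr (hdiv1 0))).const_mul K).mul_const C
    refine norm_le_zero_iff.mp (ge_of_tendsto hlim ?_)
    filter_upwards [eventually_gt_atTop 0] with n hn
    calc ‖W 0 ((1 - P) c)‖
        = ‖((W 0 : Euc d →L[ℝ] Euc d) ∘L (1 - P) ∘L ((W n).symm : Euc d →L[ℝ] Euc d)) (u n)‖ := by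
          simp [hu_eq n]
      _ ≤ K * Real.exp (-(S a 0 n)) * C :=
          le_opNorm_of_le _ (hC n) |>.trans <| mul_le_mul_of_nonneg_right (hD.unstable n 0 hn)
            ((norm_nonneg _).trans (hC n))
  have hPc : W 0 (P c) = 0 := by
    have hlim : Tendsto (fun n => K * Real.exp (-(S a n 0)) * C) atBot (𝓝 0) := by
      simpa using ((Real.tendsto_exp_comp_nhds_zero.mpr
        (tendsto_neg_atBot_iff.mpr (hdiv2 0))).const_mul K).mul_const C
    refine norm_le_zero_iff.mp (ge_of_tendsto hlim ?_)
    filter_upwards [eventually_le_atBot 0] with n hn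
    calc ‖W 0 (P c)‖
        = ‖((W 0 : Euc d →L[ℝ] Euc d) ∘L P ∘L ((W n).symm : Euc d →L[ℝ] Euc d)) (u n)‖ := by
          simp [hu_eq n]
      _ ≤ K * Real.exp (-(S a n 0)) * C :=
          le_opNorm_of_le _ (hC n) |>.trans <| mul_le_mul_of_nonneg_right (hD.stable n 0 hn)
            ((norm_nonneg _).trans (hC n))
  have hc : c = 0 := by
    rw [map_eq_zero_iff _ (W 0).injective] at hQc hPc
    simpa [hPc] using hQc
  funext n
  rw [hu_eq n, hc, map_zero, Pi.zero_apply]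

lemma eq_greenSum_of_forall_succ_of_bounded (hD : DichotomyEstimates W P K a)
    (hW : ∀ n : ℤ, W (n + 1) = (W n).trans (A n))
    (hdiv1 : ∀ p : ℤ, Tendsto (S a p) atTop atTop)
    (hdiv2 : ∀ q : ℤ, Tendsto (fun p => S a p q) atBot atTop)
    {h : ℤ → Euc d} {H : ℤ → ℝ} {B : ℝ} (hH : ∀ m, ‖h m‖ ≤ H m)
    (hHsum : ∀ n, Summable (Nterm K a n H)) (hHB : ∀ n, Nmap K a n H ≤ B)
    {w : ℤ → Euc d} (hw : ∀ n, w (n + 1) = A n (w n) + h n) {C : ℝ} (hC : ∀ n, ‖w n‖ ≤ C) :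
    w = greenSum W P h := by
  refine sub_eq_zero.mp (hD.eq_zero_of_forall_succ_of_bounded hW hdiv1 hdiv2 (C := C + B)
    (fun n => ?_) fun n => ?_)
  · rw [Pi.sub_apply, Pi.sub_apply, hw, greenSum_succ hW (hD.summable_green_apply hH (hHsum n)),
      map_sub]
    abel
  · exact (norm_sub_le _ _).trans
      (add_le_add (hC n) ((hD.norm_greenSum_le hH (hHsum n)).trans (hHB n)))

lemma norm_greenSum_sub_le (hD : DichotomyEstimates W P K a) {h : ℤ → Euc d → Euc d}
    {H r : ℤ → ℝ} (hH : ∀ n v, ‖h n v‖ ≤ H n) (hHsum : ∀ n, Summable (Nterm K a n H))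
    (hr : ∀ n, 0 ≤ r n) (hlip : ∀ n v v', ‖h n v - h n v'‖ ≤ r n * ‖v - v'‖)
    (hrsum : ∀ n, Summable (Nterm K a n r)) {w w' : ℤ → Euc d} {D : ℝ}
    (hD_le : ∀ m, ‖w m - w' m‖ ≤ D) (n : ℤ) :
    ‖greenSum W P (fun m => h m (w m)) n - greenSum W P (fun m => h m (w' m)) n‖
      ≤ Nmap K a n r * D := by
  rw [greenSum_sub (hD.summable_green_apply (fun m => hH m _) (hHsum n))
    (hD.summable_green_apply (fun m => hH m _) (hHsum n)), ← nmap_mul_const]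
  refine hD.norm_greenSum_le (fun m => ?_) (by rw [nterm_mul_const]; exact (hrsum n).mul_right D)
  exact (hlip m _ _).trans (mul_le_mul_of_nonneg_left (hD_le m) (hr m))

theorem exists_unique_bounded_solution (hD : DichotomyEstimates W P K a)
    (hW : ∀ n : ℤ, W (n + 1) = (W n).trans (A n))
    (hdiv1 : ∀ p : ℤ, Tendsto (S a p) atTop atTop)
    (hdiv2 : ∀ q : ℤ, Tendsto (fun p => S a p q) atBot atTop)
    (hK : 0 ≤ K) {h : ℤ → Euc d → Euc d} {H r : ℤ → ℝ} {B θ : ℝ}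
    (hH : ∀ n v, ‖h n v‖ ≤ H n) (hHsum : ∀ n, Summable (Nterm K a n H))
    (hHB : ∀ n, Nmap K a n H ≤ B)
    (hr : ∀ n, 0 ≤ r n) (hlip : ∀ n v v', ‖h n v - h n v'‖ ≤ r n * ‖v - v'‖)
    (hrsum : ∀ n, Summable (Nterm K a n r)) (hrθ : ∀ n, Nmap K a n r ≤ θ) (hθ : θ < 1) :
    ∃ χ : ℤ → Euc d, (∀ n, χ (n + 1) = A n (χ n) + h n (χ n)) ∧ (∀ n, ‖χ n‖ ≤ B) ∧
      ∀ w : ℤ → Euc d, (∀ n, w (n + 1) = A n (w n) + h n (w n)) →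
        (∃ C : ℝ, ∀ n, ‖w n‖ ≤ C) → w = χ := by
  have hTB (u : ℤ → Euc d) (n : ℤ) : ‖greenSum W P (fun m => h m (u m)) n‖ ≤ B :=
    (hD.norm_greenSum_le (fun m => hH m _) (hHsum n)).trans (hHB n)
  let T (u : ℤ →ᵇ Euc d) : ℤ →ᵇ Euc d := BoundedContinuousFunction.ofNormedAddCommGroup
    (greenSum W P fun m => h m (u m)) continuous_of_discreteTopology B (hTB u)
  have hθ₀ : 0 ≤ θ := (tsum_nonneg fun m => nterm_nonneg hK (hr m)).trans (hrθ 0)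
  have hT : ContractingWith ⟨θ, hθ₀⟩ T := by
    refine ⟨hθ, LipschitzWith.of_dist_le_mul fun u u' =>
      (BoundedContinuousFunction.dist_le (by positivity)).mpr fun n => ?_⟩
    rw [dist_eq_norm]
    exact (hD.norm_greenSum_sub_le hH hHsum hr hlip hrsum
      (fun m => dist_eq_norm (u m) (u' m) ▸ u.dist_coe_le_dist m) n).trans
      (mul_le_mul_of_nonneg_right (hrθ n) dist_nonneg)
  set χ := hT.fixedPoint
  have hχ : greenSum W P (fun m => h m (χ m)) = χ := congrArg DFunLike.coe hT.fixedPoint_isFixedPt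
  refine ⟨χ, fun n => ?_, fun n => hχ ▸ hTB χ n, fun w hw ⟨C, hC⟩ => ?_⟩
  · simpa only [hχ] using greenSum_succ hW (hD.summable_green_apply (fun m => hH m (χ m)) (hHsum n))
  · have hwT := hD.eq_greenSum_of_forall_succ_of_bounded hW hdiv1 hdiv2 (fun m => hH m (w m))
      hHsum hHB hw hC
    let w' : ℤ →ᵇ Euc d :=
      BoundedContinuousFunction.ofNormedAddCommGroup w continuous_of_discreteTopology C hC
    have hw' : T w' = w' := DFunLike.ext _ _ fun n => (congrFun hwT n).symm
    exact congrArg DFunLike.coe (hT.fixedPoint_unique hw')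

end DichotomyEstimates

end

theorem auxiliary_system_unique_bounded_solution_general {d : ℕ}
    (A W : ℤ → Euc d ≃L[ℝ] Euc d)
    (hW : ∀ n : ℤ, W (n + 1) = (W n).trans (A n))
    (P : Euc d →L[ℝ] Euc d)
    (K : ℝ) (hK : 1 ≤ K)
    (a : ℤ → ℝ)
    (hdiv1 : ∀ p : ℤ, Tendsto (fun q : ℤ => ∑ j ∈ Finset.Icc p q, a j) atTop atTop)
    (hdiv2 : ∀ q : ℤ, Tendsto (fun p : ℤ => ∑ j ∈ Finset.Icc p q, a j) atBot atTop)
    (hged1 : ∀ m n : ℤ, m ≤ n →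
      ‖(W n : Euc d →L[ℝ] Euc d) ∘L P ∘L ((W m).symm : Euc d →L[ℝ] Euc d)‖
        ≤ K * Real.exp (-(S a m n)))
    (hged2 : ∀ m n : ℤ, n < m →
      ‖(W n : Euc d →L[ℝ] Euc d) ∘L (1 - P) ∘L ((W m).symm : Euc d →L[ℝ] Euc d)‖
        ≤ K * Real.exp (-(S a n m)))
    (f g : ℤ → Euc d → Euc d) (F G r : ℤ → ℝ) (B θ : ℝ)
    (hF : ∀ (n : ℤ) (x : Euc d), ‖f n x‖ ≤ F n)
    (hG : ∀ (n : ℤ) (x : Euc d), ‖g n x‖ ≤ G n)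
    (hFGsum : ∀ n : ℤ, Summable (Nterm K a n (fun m => G m + F m)))
    (hH2 : ∀ n : ℤ, Nmap K a n (fun m => G m + F m) ≤ B)
    (hrpos : ∀ n : ℤ, 0 ≤ r n)
    (hglip : ∀ (n : ℤ) (x₁ x₂ : Euc d), ‖g n x₁ - g n x₂‖ ≤ r n * ‖x₁ - x₂‖)
    (hrsum : ∀ n : ℤ, Summable (Nterm K a n r))
    (hH3 : ∀ n : ℤ, Nmap K a n r ≤ θ) (hθ : θ < 1)
    (x : ℤ → Euc d) :
    ∃ χ : ℤ → Euc d,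
      (∀ n : ℤ, χ (n + 1) = A n (χ n) - f n (x n) + g n (χ n + x n)) ∧
      (∃ C : ℝ, ∀ n : ℤ, ‖χ n‖ ≤ C) ∧
      (∀ n : ℤ, ‖χ n‖ ≤ B) ∧
      (∀ w : ℤ → Euc d,
        (∀ n : ℤ, w (n + 1) = A n (w n) - f n (x n) + g n (w n + x n)) →
        (∃ C : ℝ, ∀ n : ℤ, ‖w n‖ ≤ C) → w = χ) := by
  let h (n : ℤ) (v : Euc d) : Euc d := g n (v + x n) - f n (x n)
  have hrec (w : ℤ → Euc d) (n : ℤ) : w (n + 1) = A n (w n) - f n (x n) + g n (w n + x n) ↔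
      w (n + 1) = A n (w n) + h n (w n) := by
    rw [sub_add_eq_add_sub, add_sub_assoc]
  obtain ⟨χ, hχ, hχB, hχ_unique⟩ :=
    DichotomyEstimates.exists_unique_bounded_solution ⟨hged1, hged2⟩ hW hdiv1 hdiv2
      (zero_le_one.trans hK) (h := h)
      (fun n v => (norm_sub_le _ _).trans (add_le_add (hG n _) (hF n _))) hFGsum hH2 hrpos
      (fun n v v' => by
        simpa only [h, sub_sub_sub_cancel_right, add_sub_add_right_eq_sub]
          using hglip n (v + x n) (v' + x n))
      hrsum hH3 hθ
  exact ⟨χ, fun n => (hrec χ n).mpr (hχ n), ⟨B, hχB⟩, hχB,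
    fun w hw => hχ_unique w fun n => (hrec w n).mp (hw n)⟩

theorem auxiliary_system_unique_bounded_solution {d : ℕ}
    (A W : ℤ → Euc d ≃L[ℝ] Euc d)
    (hW : ∀ n : ℤ, W (n + 1) = (W n).trans (A n))
    (P : Euc d →L[ℝ] Euc d) (hP : P ∘L P = P)
    (K : ℝ) (hK : 1 ≤ K)
    (a : ℤ → ℝ) (ha : ∀ j : ℤ, 0 ≤ a j)
    (hdiv1 : ∀ p : ℤ, Tendsto (fun q : ℤ => ∑ j ∈ Finset.Icc p q, a j) atTop atTop)
    (hdiv2 : ∀ q : ℤ, Tendsto (fun p : ℤ => ∑ j ∈ Finset.Icc p q, a j) atBot atTop)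
    (hged1 : ∀ m n : ℤ, m ≤ n →
      ‖(W n : Euc d →L[ℝ] Euc d) ∘L P ∘L ((W m).symm : Euc d →L[ℝ] Euc d)‖
        ≤ K * Real.exp (-(S a m n)))
    (hged2 : ∀ m n : ℤ, n < m →
      ‖(W n : Euc d →L[ℝ] Euc d) ∘L (1 - P) ∘L ((W m).symm : Euc d →L[ℝ] Euc d)‖
        ≤ K * Real.exp (-(S a n m)))
    (f g : ℤ → Euc d → Euc d) (F G r : ℤ → ℝ) (B θ : ℝ)
    (hF : ∀ (n : ℤ) (x : Euc d), ‖f n x‖ ≤ F n)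
    (hG : ∀ (n : ℤ) (x : Euc d), ‖g n x‖ ≤ G n)
    (hFGsum : ∀ n : ℤ, Summable (Nterm K a n (fun m => G m + F m)))
    (hH2 : ∀ n : ℤ, Nmap K a n (fun m => G m + F m) ≤ B)
    (hrpos : ∀ n : ℤ, 0 ≤ r n)
    (hflip : ∀ (n : ℤ) (x₁ x₂ : Euc d), ‖f n x₁ - f n x₂‖ ≤ r n * ‖x₁ - x₂‖)
    (hglip : ∀ (n : ℤ) (x₁ x₂ : Euc d), ‖g n x₁ - g n x₂‖ ≤ r n * ‖x₁ - x₂‖)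
    (hrsum : ∀ n : ℤ, Summable (Nterm K a n r))
    (hH3 : ∀ n : ℤ, Nmap K a n r ≤ θ) (hθ : θ < 1)
    (x : ℤ → Euc d) (hx : ∀ n : ℤ, x (n + 1) = A n (x n) + f n (x n)) :
    ∃ χ : ℤ → Euc d,
      (∀ n : ℤ, χ (n + 1) = A n (χ n) - f n (x n) + g n (χ n + x n)) ∧
      (∃ C : ℝ, ∀ n : ℤ, ‖χ n‖ ≤ C) ∧
      (∀ n : ℤ, ‖χ n‖ ≤ B) ∧
      (∀ w : ℤ → Euc d,
        (∀ n : ℤ, w (n + 1) = A n (w n) - f n (x n) + g n (w n + x n)) →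
        (∃ C : ℝ, ∀ n : ℤ, ‖w n‖ ≤ C) → w = χ) :=
  auxiliary_system_unique_bounded_solution_general A W hW P K hK a hdiv1 hdiv2 hged1 hged2 f g F G r
    B θ hF hG hFGsum hH2 hrpos hglip hrsum hH3 hθ x
end

section
/- Under the hypotheses of the existence of the unique bounded solution $\chi(\cdot;(m,\xi))$ of $w_{n+1} = A_n w_n - f(n,x(n,m,\xi)) + g(n, w_n + x(n,m,\xi))$, the flow-invariance identity $\chi(n;(m,\xi)) = \chi(n;(n, x(n,m,\xi)))$ holds for all $n, m \in \mathbb{Z}$. -/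
open Finset Filter ContinuousLinearMap

theorem solution_cocycle {X : Type*} (step : ℤ → X → X) (x : ℤ → X → ℤ → X)
    (hsol : ∀ m ξ n, x m ξ (n + 1) = step n (x m ξ n))
    (huniq : ∀ m ξ (z : ℤ → X), (∀ n, z (n + 1) = step n (z n)) → z m = ξ → z = x m ξ)
    (m n : ℤ) (ξ : X) : x n (x m ξ n) = x m ξ :=
  (huniq n (x m ξ n) (x m ξ) (hsol m ξ) rfl).symm

theorem flow_invariance_identity_general {d : ℕ}
    (A : ℤ → Euc d ≃L[ℝ] Euc d)
    (f g : ℤ → Euc d → Euc d)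
    (xSol : ℤ → Euc d → ℤ → Euc d)
    (hxSol : ∀ (m : ℤ) (ξ : Euc d), ∀ n : ℤ,
      xSol m ξ (n + 1) = A n (xSol m ξ n) + f n (xSol m ξ n))
    (hxUniq : ∀ (m : ℤ) (ξ : Euc d) (z : ℤ → Euc d),
      (∀ n : ℤ, z (n + 1) = A n (z n) + f n (z n)) → z m = ξ → z = xSol m ξ)
    (chi : ℤ → Euc d → ℤ → Euc d)
    (hchiSol : ∀ (m : ℤ) (ξ : Euc d), ∀ n : ℤ,
      chi m ξ (n + 1) = A n (chi m ξ n) - f n (xSol m ξ n) + g n (chi m ξ n + xSol m ξ n))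
    (hchiBdd : ∀ (m : ℤ) (ξ : Euc d), ∃ C : ℝ, ∀ n : ℤ, ‖chi m ξ n‖ ≤ C)
    (hchiUniq : ∀ (m : ℤ) (ξ : Euc d) (w : ℤ → Euc d),
      (∀ n : ℤ, w (n + 1) = A n (w n) - f n (xSol m ξ n) + g n (w n + xSol m ξ n)) →
      (∃ C : ℝ, ∀ n : ℤ, ‖w n‖ ≤ C) → w = chi m ξ) :
    ∀ (n m : ℤ) (ξ : Euc d), chi m ξ n = chi n (xSol m ξ n) n := by
  intro n m ξ
  have hcocycle : xSol n (xSol m ξ n) = xSol m ξ :=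
    solution_cocycle (fun k y => A k y + f k y) xSol hxSol hxUniq m n ξ
  have hchi : chi m ξ = chi n (xSol m ξ n) := by
    refine hchiUniq n (xSol m ξ n) (chi m ξ) ?_ (hchiBdd m ξ)
    rw [hcocycle]
    exact hchiSol m ξ
  rw [hchi]

theorem flow_invariance_identity {d : ℕ}
    (A W : ℤ → Euc d ≃L[ℝ] Euc d)
    (hW : ∀ n : ℤ, W (n + 1) = (W n).trans (A n))
    (P : Euc d →L[ℝ] Euc d) (hP : P ∘L P = P)
    (K : ℝ) (hK : 1 ≤ K)
    (a : ℤ → ℝ) (ha : ∀ j : ℤ, 0 ≤ a j)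
    (hdiv1 : ∀ p : ℤ, Tendsto (fun q : ℤ => ∑ j ∈ Finset.Icc p q, a j) atTop atTop)
    (hdiv2 : ∀ q : ℤ, Tendsto (fun p : ℤ => ∑ j ∈ Finset.Icc p q, a j) atBot atTop)
    (hged1 : ∀ m n : ℤ, m ≤ n →
      ‖(W n : Euc d →L[ℝ] Euc d) ∘L P ∘L ((W m).symm : Euc d →L[ℝ] Euc d)‖
        ≤ K * Real.exp (-(S a m n)))
    (hged2 : ∀ m n : ℤ, n < m →
      ‖(W n : Euc d →L[ℝ] Euc d) ∘L (1 - P) ∘L ((W m).symm : Euc d →L[ℝ] Euc d)‖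
        ≤ K * Real.exp (-(S a n m)))
    (f g : ℤ → Euc d → Euc d) (F G r : ℤ → ℝ) (B θ : ℝ)
    (hF : ∀ (n : ℤ) (x : Euc d), ‖f n x‖ ≤ F n)
    (hG : ∀ (n : ℤ) (x : Euc d), ‖g n x‖ ≤ G n)
    (hFGsum : ∀ n : ℤ, Summable (Nterm K a n (fun m => G m + F m)))
    (hH2 : ∀ n : ℤ, Nmap K a n (fun m => G m + F m) ≤ B)
    (hrpos : ∀ n : ℤ, 0 ≤ r n)
    (hflip : ∀ (n : ℤ) (x₁ x₂ : Euc d), ‖f n x₁ - f n x₂‖ ≤ r n * ‖x₁ - x₂‖)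
    (hglip : ∀ (n : ℤ) (x₁ x₂ : Euc d), ‖g n x₁ - g n x₂‖ ≤ r n * ‖x₁ - x₂‖)
    (hrsum : ∀ n : ℤ, Summable (Nterm K a n r))
    (hH3 : ∀ n : ℤ, Nmap K a n r ≤ θ) (hθ : θ < 1)
    (xSol : ℤ → Euc d → ℤ → Euc d)
    (hxSol : ∀ (m : ℤ) (ξ : Euc d), ∀ n : ℤ,
      xSol m ξ (n + 1) = A n (xSol m ξ n) + f n (xSol m ξ n))
    (hxInit : ∀ (m : ℤ) (ξ : Euc d), xSol m ξ m = ξ)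
    (hxUniq : ∀ (m : ℤ) (ξ : Euc d) (z : ℤ → Euc d),
      (∀ n : ℤ, z (n + 1) = A n (z n) + f n (z n)) → z m = ξ → z = xSol m ξ)
    (chi : ℤ → Euc d → ℤ → Euc d)
    (hchiSol : ∀ (m : ℤ) (ξ : Euc d), ∀ n : ℤ,
      chi m ξ (n + 1) = A n (chi m ξ n) - f n (xSol m ξ n) + g n (chi m ξ n + xSol m ξ n))
    (hchiBdd : ∀ (m : ℤ) (ξ : Euc d), ∃ C : ℝ, ∀ n : ℤ, ‖chi m ξ n‖ ≤ C)
    (hchiUniq : ∀ (m : ℤ) (ξ : Euc d) (w : ℤ → Euc d),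
      (∀ n : ℤ, w (n + 1) = A n (w n) - f n (xSol m ξ n) + g n (w n + xSol m ξ n)) →
      (∃ C : ℝ, ∀ n : ℤ, ‖w n‖ ≤ C) → w = chi m ξ) :
    ∀ (n m : ℤ) (ξ : Euc d), chi m ξ n = chi n (xSol m ξ n) n :=
  flow_invariance_identity_general A f g xSol hxSol hxUniq chi hchiSol hchiBdd hchiUniq
end

section
/- Under hypotheses (H1)–(H3), there exists a unique map $H:\mathbb{Z}\times\mathbb{R}^d\to\mathbb{R}^d$ such that (a) $|H(n,\xi)-\xi| \leq B$ for all $(n,\xi)$, and (b) for every solution $x_n$ of $x_{n+1}=A_nx_n+f(n,x_n)$, the sequence $H[n,x_n]$ is a solution of $y_{n+1}=A_ny_n+g(n,y_n)$. Explicitly, $H(n,\xi)=\xi+\chi(n;(n,\xi))$. -/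
open Finset Filter ContinuousLinearMap

/-- A conjugating map: it moves points a distance at most `B` and sends solutions of the
`f`-perturbed system to solutions of the `g`-perturbed system. -/
def GoodMap {d : ℕ} (A : ℤ → Euc d ≃L[ℝ] Euc d) (f g : ℤ → Euc d → Euc d) (B : ℝ)
    (H : ℤ → Euc d → Euc d) : Prop :=
  (∀ (n : ℤ) (ξ : Euc d), ‖H n ξ - ξ‖ ≤ B) ∧
  ∀ x : ℤ → Euc d, (∀ n : ℤ, x (n + 1) = A n (x n) + f n (x n)) →
    ∀ n : ℤ, H (n + 1) (x (n + 1)) = A n (H n (x n)) + g n (H n (x n))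

/-!
By variation of constants, a solution `w` of `w (n+1) = A n (w n) + h n` satisfies, on any window
`p ≤ n < q`, `w n = (stable part from w p) + (unstable part from w q) + ∑ Green n (j+1) (h j)`.
The dichotomy makes the two boundary terms of size `K e^{-S a p n} ‖w p‖` and
`K e^{-S a n q} ‖w q‖`, which vanish as `p → -∞`, `q → ∞` when `w` is bounded, since the partial
sums of `a` diverge; so `‖w n‖ ≤ N(n, G + F) ≤ B` for every bounded solution with forcing bounded
by `G + F`, in particular for `χ`. Along a solution `x` of the `f`-system, `χ(·; (m, x m))` does
not depend on `m`, by uniqueness of bounded solutions, and this makes `ξ + χ(n; (n, ξ))` a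
conjugacy. Conversely, for any such `H'`, `H'(n, x n) - x n` is a bounded solution of the
equation defining `χ`, hence equals it.
-/

section VariationOfConstants

variable {E : Type*} [NormedAddCommGroup E] [NormedSpace ℝ E]

lemma symm_apply_eq_add_sum_Ico {A W : ℤ → E ≃L[ℝ] E} (hW : ∀ n, W (n + 1) = (W n).trans (A n))
    {w h : ℤ → E} (hw : ∀ n, w (n + 1) = A n (w n) + h n) {p n : ℤ} (hpn : p ≤ n) :
    (W n).symm (w n) = (W p).symm (w p) + ∑ j ∈ Ico p n, (W (j + 1)).symm (h j) := by
  induction n, hpn using Int.leInduction with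
  | base => simp
  | succ n hpn ih =>
    rw [← insert_Ico_right_eq_Ico_add_one hpn, sum_insert right_notMem_Ico, hw n, hW n]
    simp only [ContinuousLinearEquiv.symm_trans_apply, map_add,
      ContinuousLinearEquiv.symm_apply_apply, ih]
    abel

end VariationOfConstants

open scoped Topology

def DichotomyEstimates_s11 {d : ℕ} (W : ℤ → Euc d ≃L[ℝ] Euc d) (P : Euc d →L[ℝ] Euc d) (K : ℝ)
    (a : ℤ → ℝ) : Prop :=
  (∀ m n : ℤ, m ≤ n →
    ‖(W n : Euc d →L[ℝ] Euc d) ∘L P ∘L ((W m).symm : Euc d →L[ℝ] Euc d)‖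
      ≤ K * Real.exp (-(S a m n))) ∧
  ∀ m n : ℤ, n < m →
    ‖(W n : Euc d →L[ℝ] Euc d) ∘L (1 - P) ∘L ((W m).symm : Euc d →L[ℝ] Euc d)‖
      ≤ K * Real.exp (-(S a n m))

section Dichotomy

variable {d : ℕ} {A W : ℤ → Euc d ≃L[ℝ] Euc d} {P : Euc d →L[ℝ] Euc d} {K : ℝ} {a : ℤ → ℝ}

lemma eq_stable_add_unstable_add_sum_Green (hW : ∀ n, W (n + 1) = (W n).trans (A n))
    {w h : ℤ → Euc d} (hw : ∀ n, w (n + 1) = A n (w n) + h n) {p n q : ℤ}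
    (hpn : p ≤ n) (hnq : n ≤ q) :
    w n = ((W n : Euc d →L[ℝ] Euc d) ∘L P ∘L ((W p).symm : Euc d →L[ℝ] Euc d)) (w p)
      + ((W n : Euc d →L[ℝ] Euc d) ∘L (1 - P) ∘L ((W q).symm : Euc d →L[ℝ] Euc d)) (w q)
      + ∑ j ∈ Ico p q, Green W P n (j + 1) (h j) := by
  have hp := symm_apply_eq_add_sum_Ico hW hw hpn
  have hq := symm_apply_eq_add_sum_Ico hW hw hnq
  have hGreen : ∑ j ∈ Ico p q, Green W P n (j + 1) (h j) =
      W n (P (∑ j ∈ Ico p n, (W (j + 1)).symm (h j)))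
        - W n ((1 - P) (∑ j ∈ Ico n q, (W (j + 1)).symm (h j))) := by
    rw [← Ico_union_Ico_eq_Ico hpn hnq, sum_union (Ico_disjoint_Ico_consecutive _ _ _),
      sub_eq_add_neg, map_sum, map_sum, map_sum, map_sum, ← sum_neg_distrib]
    congr 1 <;> refine sum_congr rfl fun j hj => ?_ <;> rw [mem_Ico] at hj <;> unfold Green
    · rw [if_pos (by omega)]; rfl
    · rw [if_neg (by omega)]; rfl
  calc w n = W n (P ((W n).symm (w n))) + W n ((1 - P) ((W n).symm (w n))) := by
        rw [← map_add, ← add_apply, add_sub_cancel, one_apply_eq_self,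
          ContinuousLinearEquiv.apply_symm_apply]
    _ = _ := by
        rw [hGreen]
        nth_rewrite 1 [hp]
        rw [eq_sub_of_add_eq hq.symm]
        simp only [comp_apply, ContinuousLinearEquiv.coe_coe, map_add, map_sub]
        abel

lemma norm_Green_apply_le (hged : DichotomyEstimates_s11 W P K a)
    {GF : ℤ → ℝ} {n j : ℤ} {x : Euc d} (hx : ‖x‖ ≤ GF j) :
    ‖Green W P n (j + 1) x‖ ≤ Nterm K a n GF j := by
  unfold Green Nterm
  split_ifs with hjn hjn'
  · have hbound := hged.1 (j + 1) n hjn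
    exact (le_opNorm _ _).trans
      (mul_le_mul hbound hx (norm_nonneg _) ((norm_nonneg _).trans hbound))
  · omega
  · omega
  · have hbound := hged.2 (j + 1) n (by omega)
    rw [neg_apply, norm_neg]
    exact (le_opNorm _ _).trans
      (mul_le_mul hbound hx (norm_nonneg _) ((norm_nonneg _).trans hbound))

lemma norm_le_boundary_add_Nmap (hW : ∀ n, W (n + 1) = (W n).trans (A n)) (hK : 0 ≤ K)
    (hged : DichotomyEstimates_s11 W P K a)
    {GF : ℤ → ℝ} (hGF : ∀ m, 0 ≤ GF m) {n : ℤ} (hsum : Summable (Nterm K a n GF))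
    {w h : ℤ → Euc d} (hw : ∀ n, w (n + 1) = A n (w n) + h n) (hh : ∀ m, ‖h m‖ ≤ GF m)
    {C : ℝ} (hC : ∀ m, ‖w m‖ ≤ C) {p q : ℤ} (hpn : p ≤ n) (hnq : n < q) :
    ‖w n‖ ≤ K * Real.exp (-(S a p n)) * C + K * Real.exp (-(S a n q)) * C + Nmap K a n GF := by
  rw [eq_stable_add_unstable_add_sum_Green hW hw hpn hnq.le]
  have hstable := hged.1 p n hpn
  have hunstable := hged.2 q n hnq
  refine (norm_add₃_le).trans (add_le_add (add_le_add ?_ ?_) ?_)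
  · exact (le_opNorm _ _).trans
      (mul_le_mul hstable (hC p) (norm_nonneg _) ((norm_nonneg _).trans hstable))
  · exact (le_opNorm _ _).trans
      (mul_le_mul hunstable (hC q) (norm_nonneg _) ((norm_nonneg _).trans hunstable))
  · calc ‖∑ j ∈ Ico p q, Green W P n (j + 1) (h j)‖
        ≤ ∑ j ∈ Ico p q, Nterm K a n GF j :=
          (norm_sum_le _ _).trans (sum_le_sum fun j _ => norm_Green_apply_le hged (hh j))
      _ ≤ Nmap K a n GF :=
          hsum.sum_le_tsum _ fun j _ => by
            unfold Nterm
            split_ifs <;> exact mul_nonneg (mul_nonneg hK (Real.exp_pos _).le) (hGF j)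

lemma norm_le_Nmap_of_bounded (hW : ∀ n, W (n + 1) = (W n).trans (A n)) (hK : 0 ≤ K)
    (hdiv1 : ∀ p : ℤ, Tendsto (fun q : ℤ => ∑ j ∈ Finset.Icc p q, a j) atTop atTop)
    (hdiv2 : ∀ q : ℤ, Tendsto (fun p : ℤ => ∑ j ∈ Finset.Icc p q, a j) atBot atTop)
    (hged : DichotomyEstimates_s11 W P K a)
    {GF : ℤ → ℝ} (hGF : ∀ m, 0 ≤ GF m) {n : ℤ} (hsum : Summable (Nterm K a n GF))
    {w h : ℤ → Euc d} (hw : ∀ n, w (n + 1) = A n (w n) + h n) (hh : ∀ m, ‖h m‖ ≤ GF m)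
    (hbdd : ∃ C, ∀ m, ‖w m‖ ≤ C) :
    ‖w n‖ ≤ Nmap K a n GF := by
  obtain ⟨C, hC⟩ := hbdd
  have hpast : Tendsto (fun p => K * Real.exp (-(S a p n)) * C) atBot (𝓝 0) := by
    simpa [S] using ((Real.tendsto_exp_neg_atTop_nhds_zero.comp (hdiv2 n)).const_mul K).mul_const C
  have hfuture : Tendsto (fun q => K * Real.exp (-(S a n q)) * C) atTop (𝓝 0) := by
    simpa [S] using ((Real.tendsto_exp_neg_atTop_nhds_zero.comp (hdiv1 n)).const_mul K).mul_const C
  have hlim : Tendsto (fun pq : ℤ × ℤ => K * Real.exp (-(S a pq.1 n)) * C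
      + K * Real.exp (-(S a n pq.2)) * C + Nmap K a n GF) (atBot ×ˢ atTop) (𝓝 (Nmap K a n GF)) := by
    simpa using ((hpast.comp tendsto_fst).add (hfuture.comp tendsto_snd)).add_const (Nmap K a n GF)
  refine ge_of_tendsto hlim ?_
  filter_upwards [prod_mem_prod (eventually_le_atBot n) (eventually_gt_atTop n)]
    with ⟨p, q⟩ ⟨hpn, hnq⟩
  exact norm_le_boundary_add_Nmap hW hK hged hGF hsum hw hh hC hpn hnq

end Dichotomy

section Conjugacy

variable {d : ℕ} {A : ℤ → Euc d ≃L[ℝ] Euc d} {f g : ℤ → Euc d → Euc d}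
  {xSol chi : ℤ → Euc d → ℤ → Euc d}

lemma norm_chi_le {W : ℤ → Euc d ≃L[ℝ] Euc d} (hW : ∀ n, W (n + 1) = (W n).trans (A n))
    {P : Euc d →L[ℝ] Euc d} {K : ℝ} (hK : 0 ≤ K) {a : ℤ → ℝ}
    (hdiv1 : ∀ p : ℤ, Tendsto (fun q : ℤ => ∑ j ∈ Finset.Icc p q, a j) atTop atTop)
    (hdiv2 : ∀ q : ℤ, Tendsto (fun p : ℤ => ∑ j ∈ Finset.Icc p q, a j) atBot atTop)
    (hged : DichotomyEstimates_s11 W P K a)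
    {F G : ℤ → ℝ} {B : ℝ}
    (hF : ∀ (n : ℤ) (x : Euc d), ‖f n x‖ ≤ F n)
    (hG : ∀ (n : ℤ) (x : Euc d), ‖g n x‖ ≤ G n)
    (hFGsum : ∀ n : ℤ, Summable (Nterm K a n (fun m => G m + F m)))
    (hH2 : ∀ n : ℤ, Nmap K a n (fun m => G m + F m) ≤ B)
    (hchiSol : ∀ (m : ℤ) (ξ : Euc d), ∀ n : ℤ,
      chi m ξ (n + 1) = A n (chi m ξ n) - f n (xSol m ξ n) + g n (chi m ξ n + xSol m ξ n))
    (hchiBdd : ∀ (m : ℤ) (ξ : Euc d), ∃ C : ℝ, ∀ n : ℤ, ‖chi m ξ n‖ ≤ C)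
    (m : ℤ) (ξ : Euc d) (n : ℤ) :
    ‖chi m ξ n‖ ≤ B := by
  have hGF : ∀ k, 0 ≤ G k + F k := fun k =>
    add_nonneg ((norm_nonneg _).trans (hG k 0)) ((norm_nonneg _).trans (hF k 0))
  have hrec : ∀ k, chi m ξ (k + 1) =
      A k (chi m ξ k) + (g k (chi m ξ k + xSol m ξ k) - f k (xSol m ξ k)) := fun k => by
    rw [hchiSol]; abel
  have hforcing : ∀ k, ‖g k (chi m ξ k + xSol m ξ k) - f k (xSol m ξ k)‖ ≤ G k + F k :=
    fun k => (norm_sub_le _ _).trans (add_le_add (hG _ _) (hF _ _))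
  exact (norm_le_Nmap_of_bounded hW hK hdiv1 hdiv2 hged hGF (hFGsum n) hrec hforcing
    (hchiBdd m ξ)).trans (hH2 n)

lemma chi_eq_of_isSolution
    (hxUniq : ∀ (m : ℤ) (ξ : Euc d) (z : ℤ → Euc d),
      (∀ n : ℤ, z (n + 1) = A n (z n) + f n (z n)) → z m = ξ → z = xSol m ξ)
    (hchiSol : ∀ (m : ℤ) (ξ : Euc d), ∀ n : ℤ,
      chi m ξ (n + 1) = A n (chi m ξ n) - f n (xSol m ξ n) + g n (chi m ξ n + xSol m ξ n))
    (hchiBdd : ∀ (m : ℤ) (ξ : Euc d), ∃ C : ℝ, ∀ n : ℤ, ‖chi m ξ n‖ ≤ C)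
    (hchiUniq : ∀ (m : ℤ) (ξ : Euc d) (w : ℤ → Euc d),
      (∀ n : ℤ, w (n + 1) = A n (w n) - f n (xSol m ξ n) + g n (w n + xSol m ξ n)) →
      (∃ C : ℝ, ∀ n : ℤ, ‖w n‖ ≤ C) → w = chi m ξ)
    {x : ℤ → Euc d} (hx : ∀ n, x (n + 1) = A n (x n) + f n (x n)) (m k : ℤ) :
    chi m (x m) = chi k (x k) := by
  have hxm := hxUniq m (x m) x hx rfl
  have hxk := hxUniq k (x k) x hx rfl
  refine (hchiUniq m (x m) (chi k (x k)) (fun n => ?_) (hchiBdd k (x k))).symm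
  rw [← hxm]
  simpa only [← hxk] using hchiSol k (x k) n

lemma goodMap_add_chi {B : ℝ} (hchi_le : ∀ m ξ n, ‖chi m ξ n‖ ≤ B)
    (hxUniq : ∀ (m : ℤ) (ξ : Euc d) (z : ℤ → Euc d),
      (∀ n : ℤ, z (n + 1) = A n (z n) + f n (z n)) → z m = ξ → z = xSol m ξ)
    (hchiSol : ∀ (m : ℤ) (ξ : Euc d), ∀ n : ℤ,
      chi m ξ (n + 1) = A n (chi m ξ n) - f n (xSol m ξ n) + g n (chi m ξ n + xSol m ξ n))
    (hchiBdd : ∀ (m : ℤ) (ξ : Euc d), ∃ C : ℝ, ∀ n : ℤ, ‖chi m ξ n‖ ≤ C)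
    (hchiUniq : ∀ (m : ℤ) (ξ : Euc d) (w : ℤ → Euc d),
      (∀ n : ℤ, w (n + 1) = A n (w n) - f n (xSol m ξ n) + g n (w n + xSol m ξ n)) →
      (∃ C : ℝ, ∀ n : ℤ, ‖w n‖ ≤ C) → w = chi m ξ) :
    GoodMap A f g B (fun n ξ => ξ + chi n ξ n) := by
  refine ⟨fun n ξ => by simpa using hchi_le n ξ n, fun x hx n => ?_⟩
  have hchi := chi_eq_of_isSolution hxUniq hchiSol hchiBdd hchiUniq hx
  have hx0 := hxUniq 0 (x 0) x hx rfl
  have hrec := hchiSol 0 (x 0) n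
  rw [← hx0, add_comm (chi 0 (x 0) n) (x n)] at hrec
  dsimp only
  rw [hchi (n + 1) 0, hchi n 0, hx n, hrec, map_add]
  abel

lemma eq_add_chi_of_goodMap {B : ℝ}
    (hxSol : ∀ (m : ℤ) (ξ : Euc d), ∀ n : ℤ,
      xSol m ξ (n + 1) = A n (xSol m ξ n) + f n (xSol m ξ n))
    (hxInit : ∀ (m : ℤ) (ξ : Euc d), xSol m ξ m = ξ)
    (hchiUniq : ∀ (m : ℤ) (ξ : Euc d) (w : ℤ → Euc d),
      (∀ n : ℤ, w (n + 1) = A n (w n) - f n (xSol m ξ n) + g n (w n + xSol m ξ n)) →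
      (∃ C : ℝ, ∀ n : ℤ, ‖w n‖ ≤ C) → w = chi m ξ)
    {H : ℤ → Euc d → Euc d} (hH : GoodMap A f g B H) :
    H = fun n ξ => ξ + chi n ξ n := by
  obtain ⟨hclose, hconj⟩ := hH
  funext m ξ
  have hw : (fun n => H n (xSol m ξ n) - xSol m ξ n) = chi m ξ := by
    refine hchiUniq m ξ _ (fun n => ?_) ⟨B, fun n => hclose n _⟩
    rw [hconj _ (hxSol m ξ) n, hxSol m ξ n, map_sub, sub_add_cancel]
    abel
  simpa [hxInit m ξ] using eq_add_of_sub_eq' (congrFun hw m)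

end Conjugacy

theorem existence_uniqueness_of_H_general {d : ℕ}
    (A W : ℤ → Euc d ≃L[ℝ] Euc d)
    (hW : ∀ n : ℤ, W (n + 1) = (W n).trans (A n))
    (P : Euc d →L[ℝ] Euc d)
    (K : ℝ) (hK : 1 ≤ K)
    (a : ℤ → ℝ)
    (hdiv1 : ∀ p : ℤ, Tendsto (fun q : ℤ => ∑ j ∈ Finset.Icc p q, a j) atTop atTop)
    (hdiv2 : ∀ q : ℤ, Tendsto (fun p : ℤ => ∑ j ∈ Finset.Icc p q, a j) atBot atTop)
    (hged1 : ∀ m n : ℤ, m ≤ n →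
      ‖(W n : Euc d →L[ℝ] Euc d) ∘L P ∘L ((W m).symm : Euc d →L[ℝ] Euc d)‖
        ≤ K * Real.exp (-(S a m n)))
    (hged2 : ∀ m n : ℤ, n < m →
      ‖(W n : Euc d →L[ℝ] Euc d) ∘L (1 - P) ∘L ((W m).symm : Euc d →L[ℝ] Euc d)‖
        ≤ K * Real.exp (-(S a n m)))
    (f g : ℤ → Euc d → Euc d) (F G : ℤ → ℝ) (B : ℝ)
    (hF : ∀ (n : ℤ) (x : Euc d), ‖f n x‖ ≤ F n)
    (hG : ∀ (n : ℤ) (x : Euc d), ‖g n x‖ ≤ G n)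
    (hFGsum : ∀ n : ℤ, Summable (Nterm K a n (fun m => G m + F m)))
    (hH2 : ∀ n : ℤ, Nmap K a n (fun m => G m + F m) ≤ B)
    (xSol : ℤ → Euc d → ℤ → Euc d)
    (hxSol : ∀ (m : ℤ) (ξ : Euc d), ∀ n : ℤ,
      xSol m ξ (n + 1) = A n (xSol m ξ n) + f n (xSol m ξ n))
    (hxInit : ∀ (m : ℤ) (ξ : Euc d), xSol m ξ m = ξ)
    (hxUniq : ∀ (m : ℤ) (ξ : Euc d) (z : ℤ → Euc d),
      (∀ n : ℤ, z (n + 1) = A n (z n) + f n (z n)) → z m = ξ → z = xSol m ξ)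
    (chi : ℤ → Euc d → ℤ → Euc d)
    (hchiSol : ∀ (m : ℤ) (ξ : Euc d), ∀ n : ℤ,
      chi m ξ (n + 1) = A n (chi m ξ n) - f n (xSol m ξ n) + g n (chi m ξ n + xSol m ξ n))
    (hchiBdd : ∀ (m : ℤ) (ξ : Euc d), ∃ C : ℝ, ∀ n : ℤ, ‖chi m ξ n‖ ≤ C)
    (hchiUniq : ∀ (m : ℤ) (ξ : Euc d) (w : ℤ → Euc d),
      (∀ n : ℤ, w (n + 1) = A n (w n) - f n (xSol m ξ n) + g n (w n + xSol m ξ n)) →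
      (∃ C : ℝ, ∀ n : ℤ, ‖w n‖ ≤ C) → w = chi m ξ)
    :
    GoodMap A f g B (fun n ξ => ξ + chi n ξ n) ∧
    ∀ H' : ℤ → Euc d → Euc d, GoodMap A f g B H' → H' = fun n ξ => ξ + chi n ξ n := by
  have hchi_le := norm_chi_le hW (zero_le_one.trans hK) hdiv1 hdiv2 ⟨hged1, hged2⟩ hF hG
    hFGsum hH2 hchiSol hchiBdd
  exact ⟨goodMap_add_chi hchi_le hxUniq hchiSol hchiBdd hchiUniq,
    fun _ hH => eq_add_chi_of_goodMap hxSol hxInit hchiUniq hH⟩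

theorem existence_uniqueness_of_H {d : ℕ}
    (A W : ℤ → Euc d ≃L[ℝ] Euc d)
    (hW : ∀ n : ℤ, W (n + 1) = (W n).trans (A n))
    (P : Euc d →L[ℝ] Euc d) (hP : P ∘L P = P)
    (K : ℝ) (hK : 1 ≤ K)
    (a : ℤ → ℝ) (ha : ∀ j : ℤ, 0 ≤ a j)
    (hdiv1 : ∀ p : ℤ, Tendsto (fun q : ℤ => ∑ j ∈ Finset.Icc p q, a j) atTop atTop)
    (hdiv2 : ∀ q : ℤ, Tendsto (fun p : ℤ => ∑ j ∈ Finset.Icc p q, a j) atBot atTop)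
    (hged1 : ∀ m n : ℤ, m ≤ n →
      ‖(W n : Euc d →L[ℝ] Euc d) ∘L P ∘L ((W m).symm : Euc d →L[ℝ] Euc d)‖
        ≤ K * Real.exp (-(S a m n)))
    (hged2 : ∀ m n : ℤ, n < m →
      ‖(W n : Euc d →L[ℝ] Euc d) ∘L (1 - P) ∘L ((W m).symm : Euc d →L[ℝ] Euc d)‖
        ≤ K * Real.exp (-(S a n m)))
    (f g : ℤ → Euc d → Euc d) (F G r : ℤ → ℝ) (B θ : ℝ)
    (hF : ∀ (n : ℤ) (x : Euc d), ‖f n x‖ ≤ F n)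
    (hG : ∀ (n : ℤ) (x : Euc d), ‖g n x‖ ≤ G n)
    (hFGsum : ∀ n : ℤ, Summable (Nterm K a n (fun m => G m + F m)))
    (hH2 : ∀ n : ℤ, Nmap K a n (fun m => G m + F m) ≤ B)
    (hrpos : ∀ n : ℤ, 0 ≤ r n)
    (hflip : ∀ (n : ℤ) (x₁ x₂ : Euc d), ‖f n x₁ - f n x₂‖ ≤ r n * ‖x₁ - x₂‖)
    (hglip : ∀ (n : ℤ) (x₁ x₂ : Euc d), ‖g n x₁ - g n x₂‖ ≤ r n * ‖x₁ - x₂‖)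
    (hrsum : ∀ n : ℤ, Summable (Nterm K a n r))
    (hH3 : ∀ n : ℤ, Nmap K a n r ≤ θ) (hθ : θ < 1)
    (xSol : ℤ → Euc d → ℤ → Euc d)
    (hxSol : ∀ (m : ℤ) (ξ : Euc d), ∀ n : ℤ,
      xSol m ξ (n + 1) = A n (xSol m ξ n) + f n (xSol m ξ n))
    (hxInit : ∀ (m : ℤ) (ξ : Euc d), xSol m ξ m = ξ)
    (hxUniq : ∀ (m : ℤ) (ξ : Euc d) (z : ℤ → Euc d),
      (∀ n : ℤ, z (n + 1) = A n (z n) + f n (z n)) → z m = ξ → z = xSol m ξ)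
    (chi : ℤ → Euc d → ℤ → Euc d)
    (hchiSol : ∀ (m : ℤ) (ξ : Euc d), ∀ n : ℤ,
      chi m ξ (n + 1) = A n (chi m ξ n) - f n (xSol m ξ n) + g n (chi m ξ n + xSol m ξ n))
    (hchiBdd : ∀ (m : ℤ) (ξ : Euc d), ∃ C : ℝ, ∀ n : ℤ, ‖chi m ξ n‖ ≤ C)
    (hchiUniq : ∀ (m : ℤ) (ξ : Euc d) (w : ℤ → Euc d),
      (∀ n : ℤ, w (n + 1) = A n (w n) - f n (xSol m ξ n) + g n (w n + xSol m ξ n)) →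
      (∃ C : ℝ, ∀ n : ℤ, ‖w n‖ ≤ C) → w = chi m ξ)
    :
    GoodMap A f g B (fun n ξ => ξ + chi n ξ n) ∧
    ∀ H' : ℤ → Euc d → Euc d, GoodMap A f g B H' → H' = fun n ξ => ξ + chi n ξ n :=
  existence_uniqueness_of_H_general A W hW P K hK a hdiv1 hdiv2 hged1 hged2 f g F G B hF hG hFGsum
    hH2 xSol hxSol hxInit hxUniq chi hchiSol hchiBdd hchiUniq
end

section
/- Under hypotheses (H1)–(H3), the maps $H(n,\xi)=\xi+\chi(n;(n,\xi))$ and $L(n,\nu)=\nu+\vartheta(n;(n,\nu))$ are mutually inverse: $L(n, H(n,\xi)) = \xi$ and $H(n, L(n,\nu)) = \nu$ for every $n \in \mathbb{Z}$ and $\xi, \nu \in \mathbb{R}^d$. More generally, for solutions $x(\cdot,m,\xi)$ of the $f$-system and $y(\cdot,m,\nu)$ of the $g$-system, $L[n, H[n, x(n,m,\xi)]] = x(n,m,\xi)$ and $H[n, L[n, y(n,m,\nu)]] = y(n,m,\nu)$. -/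
open Finset Filter ContinuousLinearMap

/-!
If `x` solves the `f`-system and `χ` solves its equation along `x`, then `x + χ` solves the
`g`-system and `-χ` is a bounded solution of the `ϑ`-equation along `x + χ`. Uniqueness of both
gives `ϑ(·; (n, H(n,ξ))) = -χ(·; (n,ξ))`, hence `L(n, H(n,ξ)) = ξ + χ(n) - χ(n) = ξ`; exchanging
the roles of `f` and `g` gives `H(n, L(n,ν)) = ν`.
-/

section Transfer

variable {E F : Type*} [SeminormedAddCommGroup E] [FunLike F E E] [AddMonoidHomClass F E E]
  (A : ℤ → F) (p q : ℤ → E → E) {x w : ℤ → E}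

theorem add_solves_of_transfer (hx : ∀ n, x (n + 1) = A n (x n) + p n (x n))
    (hw : ∀ n, w (n + 1) = A n (w n) - p n (x n) + q n (w n + x n)) (n : ℤ) :
    (x + w) (n + 1) = A n ((x + w) n) + q n ((x + w) n) := by
  rw [Pi.add_apply, Pi.add_apply, hx, hw, map_add, add_comm (w n)]
  abel

theorem neg_solves_of_transfer
    (hw : ∀ n, w (n + 1) = A n (w n) - p n (x n) + q n (w n + x n)) (n : ℤ) :
    (-w) (n + 1) = A n ((-w) n) + p n ((-w) n + (x + w) n) - q n ((x + w) n) := by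
  rw [Pi.neg_apply, Pi.neg_apply, Pi.add_apply, neg_add_cancel_comm_assoc, hw, map_neg,
    add_comm (w n)]
  abel

theorem eq_neg_of_transfer {m : ℤ} {ξ : E} {y θ : ℤ → E}
    (hx : ∀ n, x (n + 1) = A n (x n) + p n (x n)) (hx₀ : x m = ξ)
    (hw : ∀ n, w (n + 1) = A n (w n) - p n (x n) + q n (w n + x n))
    (hw_bdd : ∃ C : ℝ, ∀ n, ‖w n‖ ≤ C)
    (hy_uniq : ∀ z : ℤ → E, (∀ n, z (n + 1) = A n (z n) + q n (z n)) → z m = ξ + w m → z = y)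
    (hθ_uniq : ∀ v : ℤ → E, (∀ n, v (n + 1) = A n (v n) + p n (v n + y n) - q n (y n)) →
      (∃ C : ℝ, ∀ n, ‖v n‖ ≤ C) → v = θ) :
    θ = -w := by
  have hy : x + w = y := hy_uniq _ (add_solves_of_transfer A p q hx hw) (by simp [hx₀])
  obtain ⟨C, hC⟩ := hw_bdd
  refine (hθ_uniq _ (hy ▸ neg_solves_of_transfer A p q hw) ⟨C, fun n => ?_⟩).symm
  simpa using hC n

end Transfer

theorem H_and_L_are_mutually_inverse_general {d : ℕ}
    (A : ℤ → Euc d ≃L[ℝ] Euc d)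
    (f g : ℤ → Euc d → Euc d)
    (xSol : ℤ → Euc d → ℤ → Euc d)
    (hxSol : ∀ (m : ℤ) (ξ : Euc d), ∀ n : ℤ,
      xSol m ξ (n + 1) = A n (xSol m ξ n) + f n (xSol m ξ n))
    (hxInit : ∀ (m : ℤ) (ξ : Euc d), xSol m ξ m = ξ)
    (hxUniq : ∀ (m : ℤ) (ξ : Euc d) (z : ℤ → Euc d),
      (∀ n : ℤ, z (n + 1) = A n (z n) + f n (z n)) → z m = ξ → z = xSol m ξ)
    (chi : ℤ → Euc d → ℤ → Euc d)
    (hchiSol : ∀ (m : ℤ) (ξ : Euc d), ∀ n : ℤ,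
      chi m ξ (n + 1) = A n (chi m ξ n) - f n (xSol m ξ n) + g n (chi m ξ n + xSol m ξ n))
    (hchiBdd : ∀ (m : ℤ) (ξ : Euc d), ∃ C : ℝ, ∀ n : ℤ, ‖chi m ξ n‖ ≤ C)
    (hchiUniq : ∀ (m : ℤ) (ξ : Euc d) (w : ℤ → Euc d),
      (∀ n : ℤ, w (n + 1) = A n (w n) - f n (xSol m ξ n) + g n (w n + xSol m ξ n)) →
      (∃ C : ℝ, ∀ n : ℤ, ‖w n‖ ≤ C) → w = chi m ξ)
    (ySol : ℤ → Euc d → ℤ → Euc d)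
    (hySol : ∀ (m : ℤ) (ν : Euc d), ∀ n : ℤ,
      ySol m ν (n + 1) = A n (ySol m ν n) + g n (ySol m ν n))
    (hyInit : ∀ (m : ℤ) (ν : Euc d), ySol m ν m = ν)
    (hyUniq : ∀ (m : ℤ) (ν : Euc d) (z : ℤ → Euc d),
      (∀ n : ℤ, z (n + 1) = A n (z n) + g n (z n)) → z m = ν → z = ySol m ν)
    (theta : ℤ → Euc d → ℤ → Euc d)
    (hthetaSol : ∀ (m : ℤ) (ν : Euc d), ∀ n : ℤ,
      theta m ν (n + 1) = A n (theta m ν n) + f n (theta m ν n + ySol m ν n) - g n (ySol m ν n))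
    (hthetaBdd : ∀ (m : ℤ) (ν : Euc d), ∃ C : ℝ, ∀ n : ℤ, ‖theta m ν n‖ ≤ C)
    (hthetaUniq : ∀ (m : ℤ) (ν : Euc d) (w : ℤ → Euc d),
      (∀ n : ℤ, w (n + 1) = A n (w n) + f n (w n + ySol m ν n) - g n (ySol m ν n)) →
      (∃ C : ℝ, ∀ n : ℤ, ‖w n‖ ≤ C) → w = theta m ν)
    :
    (∀ (n : ℤ) (ξ : Euc d),
      (ξ + chi n ξ n) + theta n (ξ + chi n ξ n) n = ξ) ∧
    (∀ (n : ℤ) (ν : Euc d),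
      (ν + theta n ν n) + chi n (ν + theta n ν n) n = ν) ∧
    (∀ (m n : ℤ) (ξ : Euc d),
      (xSol m ξ n + chi n (xSol m ξ n) n)
        + theta n (xSol m ξ n + chi n (xSol m ξ n) n) n = xSol m ξ n) ∧
    (∀ (m n : ℤ) (ν : Euc d),
      (ySol m ν n + theta n (ySol m ν n) n)
        + chi n (ySol m ν n + theta n (ySol m ν n) n) n = ySol m ν n) := by
  have hthetaSol' : ∀ m ν n, theta m ν (n + 1) =
      A n (theta m ν n) - g n (ySol m ν n) + f n (theta m ν n + ySol m ν n) :=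
    fun m ν n => by rw [hthetaSol, sub_add_eq_add_sub]
  have hchiUniq' : ∀ m ξ (w : ℤ → Euc d),
      (∀ n, w (n + 1) = A n (w n) + g n (w n + xSol m ξ n) - f n (xSol m ξ n)) →
      (∃ C : ℝ, ∀ n, ‖w n‖ ≤ C) → w = chi m ξ :=
    fun m ξ w hw => hchiUniq m ξ w fun n => by rw [hw, sub_add_eq_add_sub]
  have hH : ∀ n ξ, theta n (ξ + chi n ξ n) = -chi n ξ := fun n ξ =>
    eq_neg_of_transfer A f g (hxSol n ξ) (hxInit n ξ) (hchiSol n ξ) (hchiBdd n ξ)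
      (hyUniq n _) (hthetaUniq n _)
  have hL : ∀ n ν, chi n (ν + theta n ν n) = -theta n ν := fun n ν =>
    eq_neg_of_transfer A g f (hySol n ν) (hyInit n ν) (hthetaSol' n ν) (hthetaBdd n ν)
      (hxUniq n _) (hchiUniq' n _)
  have hLH : ∀ n ξ, (ξ + chi n ξ n) + theta n (ξ + chi n ξ n) n = ξ := fun n ξ => by
    rw [hH, Pi.neg_apply, add_neg_cancel_right]
  have hHL : ∀ n ν, (ν + theta n ν n) + chi n (ν + theta n ν n) n = ν := fun n ν => by
    rw [hL, Pi.neg_apply, add_neg_cancel_right]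
  exact ⟨hLH, hHL, fun m n ξ => hLH n (xSol m ξ n), fun m n ν => hHL n (ySol m ν n)⟩

theorem H_and_L_are_mutually_inverse {d : ℕ}
    (A W : ℤ → Euc d ≃L[ℝ] Euc d)
    (hW : ∀ n : ℤ, W (n + 1) = (W n).trans (A n))
    (P : Euc d →L[ℝ] Euc d) (hP : P ∘L P = P)
    (K : ℝ) (hK : 1 ≤ K)
    (a : ℤ → ℝ) (ha : ∀ j : ℤ, 0 ≤ a j)
    (hdiv1 : ∀ p : ℤ, Tendsto (fun q : ℤ => ∑ j ∈ Finset.Icc p q, a j) atTop atTop)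
    (hdiv2 : ∀ q : ℤ, Tendsto (fun p : ℤ => ∑ j ∈ Finset.Icc p q, a j) atBot atTop)
    (hged1 : ∀ m n : ℤ, m ≤ n →
      ‖(W n : Euc d →L[ℝ] Euc d) ∘L P ∘L ((W m).symm : Euc d →L[ℝ] Euc d)‖
        ≤ K * Real.exp (-(S a m n)))
    (hged2 : ∀ m n : ℤ, n < m →
      ‖(W n : Euc d →L[ℝ] Euc d) ∘L (1 - P) ∘L ((W m).symm : Euc d →L[ℝ] Euc d)‖
        ≤ K * Real.exp (-(S a n m)))
    (f g : ℤ → Euc d → Euc d) (F G r : ℤ → ℝ) (B θ : ℝ)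
    (hF : ∀ (n : ℤ) (x : Euc d), ‖f n x‖ ≤ F n)
    (hG : ∀ (n : ℤ) (x : Euc d), ‖g n x‖ ≤ G n)
    (hFGsum : ∀ n : ℤ, Summable (Nterm K a n (fun m => G m + F m)))
    (hH2 : ∀ n : ℤ, Nmap K a n (fun m => G m + F m) ≤ B)
    (hrpos : ∀ n : ℤ, 0 ≤ r n)
    (hflip : ∀ (n : ℤ) (x₁ x₂ : Euc d), ‖f n x₁ - f n x₂‖ ≤ r n * ‖x₁ - x₂‖)
    (hglip : ∀ (n : ℤ) (x₁ x₂ : Euc d), ‖g n x₁ - g n x₂‖ ≤ r n * ‖x₁ - x₂‖)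
    (hrsum : ∀ n : ℤ, Summable (Nterm K a n r))
    (hH3 : ∀ n : ℤ, Nmap K a n r ≤ θ) (hθ : θ < 1)
    (xSol : ℤ → Euc d → ℤ → Euc d)
    (hxSol : ∀ (m : ℤ) (ξ : Euc d), ∀ n : ℤ,
      xSol m ξ (n + 1) = A n (xSol m ξ n) + f n (xSol m ξ n))
    (hxInit : ∀ (m : ℤ) (ξ : Euc d), xSol m ξ m = ξ)
    (hxUniq : ∀ (m : ℤ) (ξ : Euc d) (z : ℤ → Euc d),
      (∀ n : ℤ, z (n + 1) = A n (z n) + f n (z n)) → z m = ξ → z = xSol m ξ)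
    (chi : ℤ → Euc d → ℤ → Euc d)
    (hchiSol : ∀ (m : ℤ) (ξ : Euc d), ∀ n : ℤ,
      chi m ξ (n + 1) = A n (chi m ξ n) - f n (xSol m ξ n) + g n (chi m ξ n + xSol m ξ n))
    (hchiBdd : ∀ (m : ℤ) (ξ : Euc d), ∃ C : ℝ, ∀ n : ℤ, ‖chi m ξ n‖ ≤ C)
    (hchiUniq : ∀ (m : ℤ) (ξ : Euc d) (w : ℤ → Euc d),
      (∀ n : ℤ, w (n + 1) = A n (w n) - f n (xSol m ξ n) + g n (w n + xSol m ξ n)) →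
      (∃ C : ℝ, ∀ n : ℤ, ‖w n‖ ≤ C) → w = chi m ξ)
    (ySol : ℤ → Euc d → ℤ → Euc d)
    (hySol : ∀ (m : ℤ) (ν : Euc d), ∀ n : ℤ,
      ySol m ν (n + 1) = A n (ySol m ν n) + g n (ySol m ν n))
    (hyInit : ∀ (m : ℤ) (ν : Euc d), ySol m ν m = ν)
    (hyUniq : ∀ (m : ℤ) (ν : Euc d) (z : ℤ → Euc d),
      (∀ n : ℤ, z (n + 1) = A n (z n) + g n (z n)) → z m = ν → z = ySol m ν)
    (theta : ℤ → Euc d → ℤ → Euc d)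
    (hthetaSol : ∀ (m : ℤ) (ν : Euc d), ∀ n : ℤ,
      theta m ν (n + 1) = A n (theta m ν n) + f n (theta m ν n + ySol m ν n) - g n (ySol m ν n))
    (hthetaBdd : ∀ (m : ℤ) (ν : Euc d), ∃ C : ℝ, ∀ n : ℤ, ‖theta m ν n‖ ≤ C)
    (hthetaUniq : ∀ (m : ℤ) (ν : Euc d) (w : ℤ → Euc d),
      (∀ n : ℤ, w (n + 1) = A n (w n) + f n (w n + ySol m ν n) - g n (ySol m ν n)) →
      (∃ C : ℝ, ∀ n : ℤ, ‖w n‖ ≤ C) → w = theta m ν)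
    :
    (∀ (n : ℤ) (ξ : Euc d),
      (ξ + chi n ξ n) + theta n (ξ + chi n ξ n) n = ξ) ∧
    (∀ (n : ℤ) (ν : Euc d),
      (ν + theta n ν n) + chi n (ν + theta n ν n) n = ν) ∧
    (∀ (m n : ℤ) (ξ : Euc d),
      (xSol m ξ n + chi n (xSol m ξ n) n)
        + theta n (xSol m ξ n + chi n (xSol m ξ n) n) n = xSol m ξ n) ∧
    (∀ (m n : ℤ) (ν : Euc d),
      (ySol m ν n + theta n (ySol m ν n) n)
        + chi n (ySol m ν n + theta n (ySol m ν n) n) n = ySol m ν n) :=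
  H_and_L_are_mutually_inverse_general A f g xSol hxSol hxInit hxUniq chi hchiSol hchiBdd hchiUniq
    ySol hySol hyInit hyUniq theta hthetaSol hthetaBdd hthetaUniq
end

section
/- If $\|A_n - I\| \leq M$ and the Lipschitz sequence satisfies $r_n \leq r$ (constant) and $N(n,r) \leq \theta < 1$, then $\Gamma(n,\ell) \leq \exp\big(2(M + r)\ell\big)\,\theta$ for all $n \in \mathbb{Z}$ and $\ell \in \mathbb{N}$, where $\Gamma(n,\ell)=\sum_{k=n-\ell}^{n-1}K\exp(-\sum_{p=k+1}^na_p)r_k\exp(\sum_{l=k}^{n-1}(\|A_l-I\|+r_l))+\sum_{k=n}^{n+\ell-1}K\exp(-\sum_{p=n}^{k+1}a_p)r_k\exp(\sum_{l=n}^{k-1}(\|A_l-I\|+r_l))$. -/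
open Finset Filter ContinuousLinearMap

/-- The quantity `Γ(n,ℓ)` appearing in the proof of strong topological equivalence. -/
noncomputable def Gamma {d : ℕ} (A : ℤ → Euc d →L[ℝ] Euc d) (K : ℝ) (a r : ℤ → ℝ)
    (n : ℤ) (ℓ : ℕ) : ℝ :=
  (∑ k ∈ Finset.Icc (n - ℓ) (n - 1),
    K * Real.exp (-(S a (k + 1) n)) * r k *
      Real.exp (∑ l ∈ Finset.Icc k (n - 1), (‖A l - 1‖ + r l)))
  + ∑ k ∈ Finset.Icc n (n + ℓ - 1),
    K * Real.exp (-(S a n (k + 1))) * r k *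
      Real.exp (∑ l ∈ Finset.Icc n (k - 1), (‖A l - 1‖ + r l))

/-!
Each summand of `Γ(n,ℓ)` is the summand of `N(n,r)` with the same index `k`, times the correction
factor `exp (∑ (‖A l - 1‖ + r l))` over at most `ℓ` indices `l`, hence at most `exp ((M + rc) ℓ)`.
Since `N(n,r)` has nonnegative terms, the finite sum over `n - ℓ ≤ k < n + ℓ` is at most
`N(n,r) ≤ θ`; the factor `2` in the exponent is slack.
-/

section Nterm

variable {K : ℝ} {a g : ℤ → ℝ} {n : ℤ}

theorem Nterm_nonneg (hK : 0 ≤ K) (hg : ∀ m, 0 ≤ g m) (m : ℤ) : 0 ≤ Nterm K a n g m := by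
  unfold Nterm
  split <;> exact mul_nonneg (mul_nonneg hK (Real.exp_pos _).le) (hg m)

theorem sum_Nterm_le_Nmap (hK : 0 ≤ K) (hg : ∀ m, 0 ≤ g m) (hs : Summable (Nterm K a n g))
    (s : Finset ℤ) : ∑ m ∈ s, Nterm K a n g m ≤ Nmap K a n g :=
  hs.sum_le_tsum s fun m _ => Nterm_nonneg hK hg m

end Nterm

theorem Finset.sum_le_mul_of_card_le {ι : Type*} {s : Finset ι} {f : ι → ℝ} {C : ℝ} {ℓ : ℕ}
    (hf : ∀ i, f i ≤ C) (hC : 0 ≤ C) (hs : s.card ≤ ℓ) : ∑ i ∈ s, f i ≤ C * ℓ :=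
  calc ∑ i ∈ s, f i ≤ s.card • C := s.sum_le_card_nsmul f C fun i _ => hf i
    _ = C * s.card := by rw [nsmul_eq_mul, mul_comm]
    _ ≤ C * ℓ := by gcongr

theorem Gamma_le_sum_Nterm_mul_exp {d : ℕ} {A : ℤ → Euc d →L[ℝ] Euc d} {K C : ℝ} {a r : ℤ → ℝ}
    (hK : 0 ≤ K) (hr : ∀ m, 0 ≤ r m) (hC : ∀ l, ‖A l - 1‖ + r l ≤ C) (n : ℤ) (ℓ : ℕ) :
    Gamma A K a r n ℓ ≤ (∑ k ∈ Icc (n - ℓ) (n + ℓ - 1), Nterm K a n r k) * Real.exp (C * ℓ) := by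
  have hC0 : 0 ≤ C := (add_nonneg (norm_nonneg _) (hr 0)).trans (hC 0)
  have hcorr : ∀ s : Finset ℤ, s.card ≤ ℓ →
      Real.exp (∑ l ∈ s, (‖A l - 1‖ + r l)) ≤ Real.exp (C * ℓ) := fun s hs =>
    Real.exp_le_exp.2 (sum_le_mul_of_card_le hC hC0 hs)
  have hpast : ∀ k ∈ Icc (n - ℓ) (n - 1),
      K * Real.exp (-(S a (k + 1) n)) * r k *
        Real.exp (∑ l ∈ Icc k (n - 1), (‖A l - 1‖ + r l)) ≤
      Nterm K a n r k * Real.exp (C * ℓ) := by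
    intro k hk
    rw [mem_Icc] at hk
    rw [Nterm, if_pos (by omega)]
    exact mul_le_mul_of_nonneg_left (hcorr _ (by rw [Int.card_Icc]; omega))
      (mul_nonneg (mul_nonneg hK (Real.exp_pos _).le) (hr k))
  have hfuture : ∀ k ∈ Icc n (n + ℓ - 1),
      K * Real.exp (-(S a n (k + 1))) * r k *
        Real.exp (∑ l ∈ Icc n (k - 1), (‖A l - 1‖ + r l)) ≤
      Nterm K a n r k * Real.exp (C * ℓ) := by
    intro k hk
    rw [mem_Icc] at hk
    rw [Nterm, if_neg (by omega)]
    exact mul_le_mul_of_nonneg_left (hcorr _ (by rw [Int.card_Icc]; omega))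
      (mul_nonneg (mul_nonneg hK (Real.exp_pos _).le) (hr k))
  have hdisj : Disjoint (Icc (n - ℓ) (n - 1)) (Icc n (n + ℓ - 1)) :=
    disjoint_left.2 fun x hx hx' => by rw [mem_Icc] at hx hx'; omega
  have hunion : Icc (n - ℓ) (n - 1) ∪ Icc n (n + ℓ - 1) = Icc (n - ℓ) (n + ℓ - 1) := by
    ext x; simp only [mem_union, mem_Icc]; omega
  rw [← hunion, sum_union hdisj, add_mul, sum_mul, sum_mul]
  exact add_le_add (sum_le_sum hpast) (sum_le_sum hfuture)

theorem gamma_uniform_bound_general {d : ℕ}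
    (A : ℤ → Euc d →L[ℝ] Euc d) (K : ℝ) (hK : 1 ≤ K)
    (a : ℤ → ℝ)
    (M : ℝ) (hM : ∀ n : ℤ, ‖A n - 1‖ ≤ M)
    (r : ℤ → ℝ) (hrpos : ∀ n : ℤ, 0 ≤ r n)
    (rc : ℝ) (hrc : ∀ n : ℤ, r n ≤ rc)
    (θ : ℝ)
    (hrsum : ∀ n : ℤ, Summable (Nterm K a n r))
    (hNr : ∀ n : ℤ, Nmap K a n r ≤ θ) :
    ∀ (n : ℤ) (ℓ : ℕ), Gamma A K a r n ℓ ≤ Real.exp (2 * (M + rc) * ℓ) * θ := by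
  intro n ℓ
  have hK0 : 0 ≤ K := zero_le_one.trans hK
  have hC : ∀ l, ‖A l - 1‖ + r l ≤ M + rc := fun l => add_le_add (hM l) (hrc l)
  have hC0 : 0 ≤ M + rc := (add_nonneg (norm_nonneg _) (hrpos 0)).trans (hC 0)
  have hθ0 : 0 ≤ θ := (tsum_nonneg (Nterm_nonneg hK0 hrpos)).trans (hNr 0)
  calc Gamma A K a r n ℓ
      ≤ (∑ k ∈ Icc (n - ℓ) (n + ℓ - 1), Nterm K a n r k) * Real.exp ((M + rc) * ℓ) :=
        Gamma_le_sum_Nterm_mul_exp hK0 hrpos hC n ℓ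
    _ ≤ θ * Real.exp ((M + rc) * ℓ) := by
        gcongr
        exact (sum_Nterm_le_Nmap hK0 hrpos (hrsum n) _).trans (hNr n)
    _ ≤ Real.exp (2 * (M + rc) * ℓ) * θ := by
        rw [mul_comm]
        gcongr
        linarith [mul_nonneg hC0 (Nat.cast_nonneg ℓ : (0 : ℝ) ≤ ℓ)]

theorem gamma_uniform_bound {d : ℕ}
    (A : ℤ → Euc d →L[ℝ] Euc d) (K : ℝ) (hK : 1 ≤ K)
    (a : ℤ → ℝ) (ha : ∀ j : ℤ, 0 ≤ a j)
    (M : ℝ) (hM : ∀ n : ℤ, ‖A n - 1‖ ≤ M)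
    (r : ℤ → ℝ) (hrpos : ∀ n : ℤ, 0 ≤ r n)
    (rc : ℝ) (hrc : ∀ n : ℤ, r n ≤ rc)
    (θ : ℝ) (hθ : θ < 1)
    (hrsum : ∀ n : ℤ, Summable (Nterm K a n r))
    (hNr : ∀ n : ℤ, Nmap K a n r ≤ θ) :
    ∀ (n : ℤ) (ℓ : ℕ), Gamma A K a r n ℓ ≤ Real.exp (2 * (M + rc) * ℓ) * θ :=
  gamma_uniform_bound_general A K hK a M hM r hrpos rc hrc θ hrsum hNr
end
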